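/- arXiv:2205.04984 — 2 statements merged into one kernel-verified Lean document; each statement's English description precedes it below -/
import Mathlib

section
/- Let c be the minimal integer such that every finite graph containing a spanning double tree has a c-balanced decomposition into two connected spanning subgraphs. Then every countably infinite graph G containing a spanning double tree admits a partition of its edges into two spanning subgraphs S1 and S2 such that S1 and S2 are semiconnected in G, and for every vertex v either both d_{S1}(v) and d_{S2}(v) are infinite or |d_{S1}(v) - d_{S2}(v)| ≤ c. -/
/-- A multigraph without loops: edges `E` with an endpoint map into unordered
pairs of vertices, no edge being a loop. -/
structure Multigraph (V : Type*) (E : Type*) where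
  ends : E → Sym2 V
  loopless : ∀ e, ¬ (ends e).IsDiag

namespace Multigraph

variable {V E : Type*}

/-- `a` and `b` are joined by an edge belonging to the edge set `S`. -/
def Adj (G : Multigraph V E) (S : Set E) (a b : V) : Prop :=
  ∃ e ∈ S, G.ends e = s(a, b)

/-- Reachability in the spanning subgraph with edge set `S`. -/
def Reachable (G : Multigraph V E) (S : Set E) (a b : V) : Prop :=
  Relation.ReflTransGen (G.Adj S) a b

/-- The spanning subgraph with edge set `S` is connected. -/
def Connected (G : Multigraph V E) (S : Set E) : Prop :=
  ∀ a b : V, G.Reachable S a b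

/-- The spanning subgraph with edge set `S` is acyclic: every edge of `S`
is a bridge of `S`. -/
def Acyclic (G : Multigraph V E) (S : Set E) : Prop :=
  ∀ e ∈ S, ∀ a b : V, G.ends e = s(a, b) → ¬ G.Reachable (S \ {e}) a b

/-- `S` is the edge set of a spanning tree: connected and acyclic. -/
def IsSpanningTree (G : Multigraph V E) (S : Set E) : Prop :=
  G.Connected S ∧ G.Acyclic S

/-- The edges of `S` incident to `v`. -/
def incEdges (G : Multigraph V E) (S : Set E) (v : V) : Set E :=
  {e ∈ S | v ∈ G.ends e}

/-- The degree of `v` in the spanning subgraph with edge set `S`. -/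
noncomputable def deg (G : Multigraph V E) (S : Set E) (v : V) : ℕ :=
  (G.incEdges S v).ncard

/-- `T1, T2` form a double tree decomposition of `G`: they partition the
edges of `G` and are both spanning trees. -/
def IsDTD (G : Multigraph V E) (T1 T2 : Set E) : Prop :=
  T1 ∪ T2 = Set.univ ∧ Disjoint T1 T2 ∧ G.IsSpanningTree T1 ∧ G.IsSpanningTree T2

/-- `G` is a double tree: the edge-disjoint union of two spanning trees. -/
def IsDoubleTree (G : Multigraph V E) : Prop :=
  ∃ T1 T2, G.IsDTD T1 T2

/-- A decomposition into two spanning subgraphs is `c`-balanced if at each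
vertex the two degrees differ by at most `c`. -/
def Balanced (G : Multigraph V E) (c : ℕ) (S1 S2 : Set E) : Prop :=
  ∀ v : V, |(G.deg S1 v : ℤ) - (G.deg S2 v : ℤ)| ≤ (c : ℤ)

end Multigraph

namespace Multigraph

variable {V E : Type*}

/-- The edges of `G` crossing the vertex cut `(A, Aᶜ)`. -/
def CrossEdges (G : Multigraph V E) (A : Set V) : Set E :=
  {e | ∃ a ∈ A, ∃ b ∈ Aᶜ, G.ends e = s(a, b)}

/-- The spanning subgraph with edge set `S` is semiconnected in `G`:
it contains an edge of every finite cut of `G`. -/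
def Semiconnected (G : Multigraph V E) (S : Set E) : Prop :=
  ∀ A : Set V, A.Nonempty → Aᶜ.Nonempty → (G.CrossEdges A).Finite →
    (S ∩ G.CrossEdges A).Nonempty

/-- At every vertex, either both degrees are infinite, or both are finite and
differ by at most `c`. -/
def BalancedOrInfinite (G : Multigraph V E) (c : ℕ) (S1 S2 : Set E) : Prop :=
  ∀ v : V,
    ((G.incEdges S1 v).Infinite ∧ (G.incEdges S2 v).Infinite) ∨
    ((G.incEdges S1 v).Finite ∧ (G.incEdges S2 v).Finite ∧
      |(G.deg S1 v : ℤ) - (G.deg S2 v : ℤ)| ≤ (c : ℤ))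

end Multigraph

/-- Every finite graph containing two edge-disjoint spanning trees has a
`c`-balanced decomposition into two connected spanning subgraphs
(finite multigraphs are represented up to isomorphism on `Fin n`, `Fin m`). -/
def FinContainsDoubleTreeBalanced (c : ℕ) : Prop :=
  ∀ (n m : ℕ) (G : Multigraph (Fin n) (Fin m)),
    (∃ T1 T2 : Set (Fin m), Disjoint T1 T2 ∧ G.IsSpanningTree T1 ∧ G.IsSpanningTree T2) →
    ∃ G1 G2 : Set (Fin m), G1 ∪ G2 = Set.univ ∧ Disjoint G1 G2 ∧
      G.Connected G1 ∧ G.Connected G2 ∧ G.Balanced c G1 G2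

/-!
For locally finite `G`, contract, for a finite edge set `F`, all edges outside `F`. The result is
a finite graph with two edge-disjoint spanning trees, so it has a `c`-balanced decomposition into
two connected spanning subgraphs. Pulled back to `G`, both parts meet every cut contained in `F`,
and they are `c`-balanced at every vertex all of whose edges lie in `F`. A limit along an
ultrafilter (Rado's selection principle) gives one decomposition that does this for every finite
`F`, hence is semiconnected and `c`-balanced.

In general, a vertex of infinite degree is replaced by a ray whose vertices each carry `B = c + 5`
of its edges, consecutive ray vertices being joined by two parallel rails, one added to each
spanning tree. The new graph is locally finite and still has two disjoint connected spanning
subgraphs, and balance at a ray vertex forces both parts to contain one of its `B` original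
edges, so both parts have infinite degree at the original vertex.
-/

open Set Filter in
/-- Rado's selection principle; the global `S` is a limit along an ultrafilter on finite sets. -/
theorem exists_forall_finite_of_forall_finite {E : Type*} (P : Set E → Set E → Prop)
    (hP : ∀ {K F S T : Set E}, K ⊆ F → (∀ e ∈ K, e ∈ S ↔ e ∈ T) → P F S → P K T)
    (h : ∀ F : Set E, F.Finite → ∃ S, P F S) : ∃ S : Set E, ∀ K : Set E, K.Finite → P K S := by
  choose S hS using fun F : Finset E => h F F.finite_toSet
  let U : Ultrafilter (Finset E) := .of atTop
  refine ⟨{e | ∀ᶠ F in U, e ∈ S F}, fun K hK => ?_⟩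
  have hagree : ∀ᶠ F in U, ∀ e ∈ K, e ∈ S F ↔ ∀ᶠ F' in U, e ∈ S F' := by
    refine hK.eventually_all.2 fun e _ => ?_
    by_cases he : ∀ᶠ F in U, e ∈ S F
    · exact he.mono fun F heF => iff_of_true heF he
    · exact (Ultrafilter.eventually_not.2 he).mono fun F heF => iff_of_false heF he
  have hcover : ∀ᶠ F : Finset E in U, K ⊆ F :=
    Ultrafilter.of_le atTop ((eventually_ge_atTop hK.toFinset).mono fun F hF => by simpa using hF)
  obtain ⟨F, hKF, hF⟩ := (hcover.and hagree).exists
  exact hP hKF hF (hS F)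

namespace Multigraph

open Set Function

variable {V E : Type*} {G : Multigraph V E} {S T F : Set E} {a b v : V}

theorem Adj.symm (h : G.Adj S a b) : G.Adj S b a :=
  let ⟨e, he, hab⟩ := h
  ⟨e, he, hab.trans Sym2.eq_swap⟩

theorem Reachable.symm (h : G.Reachable S a b) : G.Reachable S b a := by
  induction h with
  | refl => exact .refl
  | tail _ hxy ih => exact .head hxy.symm ih

theorem Reachable.trans {c : V} (h : G.Reachable S a b) (h' : G.Reachable S b c) :
    G.Reachable S a c :=
  Relation.ReflTransGen.trans h h'

theorem reachable_equivalence : Equivalence (G.Reachable S) :=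
  ⟨fun _ => Relation.ReflTransGen.refl, Reachable.symm, Reachable.trans⟩

theorem Reachable.lift {V' E' : Type*} {H : Multigraph V' E'} {S' : Set E'} (φ : V → V')
    (hφ : ∀ e ∈ S, ∀ a b, G.ends e = s(a, b) → H.Reachable S' (φ a) (φ b))
    (h : G.Reachable S a b) : H.Reachable S' (φ a) (φ b) :=
  Relation.ReflTransGen.lift' φ (fun _ _ ⟨e, he, hab⟩ => hφ e he _ _ hab) _ _ h

theorem Reachable.mono (hST : S ⊆ T) (h : G.Reachable S a b) : G.Reachable T a b :=
  h.lift id fun e he _ _ hab => .single ⟨e, hST he, hab⟩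

theorem Reachable.mem_iff {A : Set V} (hA : Disjoint S (G.CrossEdges A))
    (h : G.Reachable S a b) : a ∈ A ↔ b ∈ A := by
  induction h with
  | refl => rfl
  | @tail x y _ hxy ih =>
    obtain ⟨e, he, hexy⟩ := hxy
    have hcross : e ∉ G.CrossEdges A := hA.notMem_of_mem_left he
    refine ih.trans ⟨fun hx => ?_, fun hy => ?_⟩ <;> by_contra hA'
    · exact hcross ⟨x, hx, y, hA', hexy⟩
    · exact hcross ⟨y, hy, x, hA', hexy.trans Sym2.eq_swap⟩

theorem Reachable.eq_of_incEdges_subset (hv : G.incEdges univ v ⊆ F)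
    (h : G.Reachable Fᶜ v a) : a = v := by
  rcases Relation.ReflTransGen.cases_head h with rfl | ⟨_, ⟨e, heF, hev⟩, _⟩
  · rfl
  · exact absurd (hv ⟨trivial, hev ▸ Sym2.mem_mk_left _ _⟩) heF

theorem Connected.mono (hST : S ⊆ T) (h : G.Connected S) : G.Connected T :=
  fun a b => (h a b).mono hST

theorem Connected.inter_crossEdges_nonempty (h : G.Connected S) {A : Set V} (hA : A.Nonempty)
    (hAc : Aᶜ.Nonempty) : (S ∩ G.CrossEdges A).Nonempty := by
  obtain ⟨a, ha⟩ := hA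
  obtain ⟨b, hb⟩ := hAc
  by_contra hS
  exact hb (((h a b).mem_iff (disjoint_iff_inter_eq_empty.2 (not_nonempty_iff_eq_empty.1 hS))).1 ha)

theorem Connected.diff_singleton {e : E} (h : G.Connected S) (he : G.ends e = s(a, b))
    (hab : G.Reachable (S \ {e}) a b) : G.Connected (S \ {e}) := by
  refine fun x y => (h x y).lift id fun f hf x y hxy => ?_
  by_cases hfe : f = e
  · subst hfe
    rcases Sym2.eq_iff.1 (hxy.symm.trans he) with ⟨rfl, rfl⟩ | ⟨rfl, rfl⟩
    exacts [hab, hab.symm]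
  · exact .single ⟨f, ⟨hf, hfe⟩, hxy⟩

theorem Connected.exists_isSpanningTree_subset [Finite E] (h : G.Connected S) :
    ∃ T ⊆ S, G.IsSpanningTree T := by
  obtain ⟨T, hTS, hTconn, hTmin⟩ := exists_minimal_le_of_wellFoundedLT G.Connected S h
  refine ⟨T, hTS, hTconn, fun e he a b hab hreach => ?_⟩
  exact (hTmin (hTconn.diff_singleton hab hreach) sdiff_subset he).2 rfl

theorem mem_crossEdges_preimage_iff {V' : Type*} (φ : V → V') {A : Set V'} {e : E} :
    e ∈ G.CrossEdges (φ ⁻¹' A) ↔ ∃ a ∈ A, ∃ b ∈ Aᶜ, (G.ends e).map φ = s(a, b) := by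
  constructor
  · rintro ⟨x, hx, y, hy, hxy⟩
    exact ⟨φ x, hx, φ y, hy, by rw [hxy, Sym2.map_mk]⟩
  · rintro ⟨a, ha, b, hb, hab⟩
    obtain ⟨x, y, hxy⟩ : ∃ x y, G.ends e = s(x, y) := ⟨_, _, (Quot.out_eq (G.ends e)).symm⟩
    rw [hxy, Sym2.map_mk, Sym2.eq_iff] at hab
    rcases hab with ⟨rfl, rfl⟩ | ⟨rfl, rfl⟩
    · exact ⟨x, ha, y, hb, hxy⟩
    · exact ⟨y, ha, x, hb, hxy.trans Sym2.eq_swap⟩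

theorem incEdges_mono (hST : S ⊆ T) : G.incEdges S v ⊆ G.incEdges T v :=
  fun _ he => ⟨hST he.1, he.2⟩

theorem deg_congr (h : ∀ e ∈ G.incEdges univ v, e ∈ S ↔ e ∈ T) : G.deg S v = G.deg T v := by
  refine congrArg ncard (ext fun e => ⟨fun he => ⟨?_, he.2⟩, fun he => ⟨?_, he.2⟩⟩)
  exacts [(h e ⟨trivial, he.2⟩).1 he.1, (h e ⟨trivial, he.2⟩).2 he.1]

section Minor

variable {V' E' : Type*} {φ : V → V'} {ι : E' → E}
  {hφι : ∀ f, ¬((G.ends (ι f)).map φ).IsDiag}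

variable (G φ ι hφι) in
def minor : Multigraph V' E' :=
  ⟨fun f => (G.ends (ι f)).map φ, hφι⟩

theorem Connected.minor {S' : Set E'} (hφ : Surjective φ)
    (hS : ∀ e ∈ S, ∀ a b, G.ends e = s(a, b) → φ a = φ b ∨ ∃ f ∈ S', ι f = e)
    (h : G.Connected S) : (G.minor φ ι hφι).Connected S' := by
  intro x y
  obtain ⟨a, rfl⟩ := hφ x
  obtain ⟨b, rfl⟩ := hφ y
  refine (h a b).lift φ fun e he a b hab => ?_
  rcases hS e he a b hab with hφab | ⟨f, hf, rfl⟩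
  · exact hφab ▸ .refl
  · exact .single ⟨f, hf, show (G.ends (ι f)).map φ = _ by rw [hab, Sym2.map_mk]⟩

theorem Connected.exists_mem_crossEdges_of_minor {S' : Set E'}
    (h : (G.minor φ ι hφι).Connected S') {A : Set V} (hA : A.Nonempty) (hAc : Aᶜ.Nonempty)
    (hsat : ∀ a b, φ a = φ b → a ∈ A → b ∈ A) : ∃ f ∈ S', ι f ∈ G.CrossEdges A := by
  have hpre : φ ⁻¹' (φ '' A) = A :=
    (subset_preimage_image φ A).antisymm' fun b ⟨a, ha, hab⟩ => hsat a b hab ha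
  obtain ⟨b, hb⟩ := hAc
  obtain ⟨f, hf, hfA⟩ := h.inter_crossEdges_nonempty (hA.image φ)
    ⟨φ b, fun hφb => hb (hpre ▸ hφb)⟩
  exact ⟨f, hf, hpre ▸ (G.mem_crossEdges_preimage_iff φ).2 hfA⟩

theorem incEdges_eq_image_minor (hv : ∀ x, φ x = φ v → x = v)
    (hrange : G.incEdges univ v ⊆ range ι) :
    G.incEdges T v = ι '' (G.minor φ ι hφι).incEdges (ι ⁻¹' T) (φ v) := by
  ext e
  constructor
  · rintro ⟨heT, hve⟩
    obtain ⟨f, rfl⟩ := hrange ⟨trivial, hve⟩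
    exact ⟨f, ⟨heT, Sym2.mem_map.2 ⟨v, hve, rfl⟩⟩, rfl⟩
  · rintro ⟨f, ⟨hfT, hvf⟩, rfl⟩
    obtain ⟨x, hx, hxv⟩ := Sym2.mem_map.1 hvf
    exact ⟨hfT, hv x hxv ▸ hx⟩

theorem deg_eq_deg_minor (hι : Injective ι) (hv : ∀ x, φ x = φ v → x = v)
    (hrange : G.incEdges univ v ⊆ range ι) :
    G.deg T v = (G.minor φ ι hφι).deg (ι ⁻¹' T) (φ v) := by
  rw [deg, incEdges_eq_image_minor hv hrange, ncard_image_of_injective _ hι, deg]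

end Minor

variable (G) in
def reachableSetoid (S : Set E) : Setoid V :=
  ⟨G.Reachable S, reachable_equivalence⟩

theorem exists_reachable_compl_mem_ends (hconn : G.Connected univ) {e₀ : E} (he₀ : e₀ ∈ F)
    (v : V) : ∃ e ∈ F, ∃ w ∈ G.ends e, G.Reachable Fᶜ v w := by
  by_contra! hnot
  obtain ⟨e, -, x, hx, y, hy, hxy⟩ :=
    hconn.inter_crossEdges_nonempty (A := {w | G.Reachable Fᶜ v w}) ⟨v, .refl⟩
      ⟨_, hnot e₀ he₀ _ (Sym2.out_fst_mem (G.ends e₀))⟩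
  by_cases heF : e ∈ F
  · exact hnot e heF x (hxy ▸ Sym2.mem_mk_left x y) hx
  · exact hy (hx.tail ⟨e, heF, hxy⟩)

theorem finite_quotient_reachableSetoid_compl (hconn : G.Connected univ) (hF : F.Finite) :
    Finite (Quotient (G.reachableSetoid Fᶜ)) := by
  rcases F.eq_empty_or_nonempty with rfl | ⟨e₀, he₀⟩
  · refine @Finite.of_subsingleton _ ⟨Quotient.ind₂ fun a b => Quotient.sound ?_⟩
    exact (hconn a b).mono (by simp)
  · let W : Set V := ⋃ e ∈ F, {w | w ∈ G.ends e}
    have hW : W.Finite := hF.biUnion fun e _ => by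
      obtain ⟨x, y, hxy⟩ : ∃ x y, G.ends e = s(x, y) := ⟨_, _, (Quot.out_eq (G.ends e)).symm⟩
      exact (toFinite {x, y}).subset fun w (hw : w ∈ G.ends e) => by rwa [hxy, Sym2.mem_iff] at hw
    have := hW.to_subtype
    refine Finite.of_surjective (fun w : W => (⟦w.1⟧ : Quotient (G.reachableSetoid Fᶜ)))
      (Quotient.ind fun v => ?_)
    obtain ⟨e, he, w, hw, hvw⟩ := G.exists_reachable_compl_mem_ends hconn he₀ v
    exact ⟨⟨w, mem_biUnion he hw⟩, Quotient.sound hvw.symm⟩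

/-- Contract the edges outside the finite set `F` and delete the resulting loops. -/
theorem exists_fin_minor (hconn : G.Connected univ) (hF : F.Finite) :
    ∃ (N M : ℕ) (φ : V → Fin N) (ι : Fin M → E) (_ : ∀ f, ¬((G.ends (ι f)).map φ).IsDiag),
      Surjective φ ∧ Injective ι ∧ (∀ a b, φ a = φ b ↔ G.Reachable Fᶜ a b) ∧
      ∀ e a b, G.ends e = s(a, b) → φ a = φ b ∨ e ∈ range ι := by
  have := G.finite_quotient_reachableSetoid_compl hconn hF
  obtain ⟨N, ⟨eQ⟩⟩ := Finite.exists_equiv_fin (Quotient (G.reachableSetoid Fᶜ))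
  let φ : V → Fin N := fun v => eQ ⟦v⟧
  let L : Set E := {e ∈ F | ¬((G.ends e).map φ).IsDiag}
  have := (hF.subset fun e (he : e ∈ L) => he.1).to_subtype
  obtain ⟨M, ⟨eL⟩⟩ := Finite.exists_equiv_fin L
  have hφ : ∀ a b, φ a = φ b ↔ G.Reachable Fᶜ a b := fun a b =>
    eQ.injective.eq_iff.trans Quotient.eq
  refine ⟨N, M, φ, fun f => (eL.symm f).1, fun f => (eL.symm f).2.2,
    eQ.surjective.comp Quotient.mk_surjective,
    Subtype.val_injective.comp eL.symm.injective, hφ, fun e a b hab => ?_⟩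
  by_cases hL : e ∈ L
  · exact .inr ⟨eL ⟨e, hL⟩, by simp⟩
  · refine .inl ?_
    by_cases heF : e ∈ F
    · simpa [L, heF, hab] using hL
    · exact (hφ a b).2 (.single ⟨e, heF, hab⟩)

def BalancedSplitOn (G : Multigraph V E) (c : ℕ) (F S : Set E) : Prop :=
  (∀ A : Set V, A.Nonempty → Aᶜ.Nonempty → G.CrossEdges A ⊆ F →
    (S ∩ G.CrossEdges A).Nonempty ∧ (Sᶜ ∩ G.CrossEdges A).Nonempty) ∧
  ∀ v, G.incEdges univ v ⊆ F → |(G.deg S v : ℤ) - (G.deg Sᶜ v : ℤ)| ≤ c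

theorem BalancedSplitOn.restrict {c : ℕ} {K : Set E} (h : G.BalancedSplitOn c F S)
    (hKF : K ⊆ F) (hST : ∀ e ∈ K, e ∈ S ↔ e ∈ T) : G.BalancedSplitOn c K T := by
  refine ⟨fun A hA hAc hAK => ?_, fun v hvK => ?_⟩
  · obtain ⟨⟨e, heS, heA⟩, ⟨e', heS', heA'⟩⟩ := h.1 A hA hAc (hAK.trans hKF)
    exact ⟨⟨e, (hST e (hAK heA)).1 heS, heA⟩,
      ⟨e', fun heT => heS' ((hST e' (hAK heA')).2 heT), heA'⟩⟩
  · rw [deg_congr (S := T) fun e he => (hST e (hvK he)).symm,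
      deg_congr (S := Tᶜ) (T := Sᶜ) fun e he => (not_congr (hST e (hvK he))).symm]
    exact h.2 v (hvK.trans hKF)

theorem exists_balancedSplitOn {c : ℕ} (hfin : FinContainsDoubleTreeBalanced c)
    {C₁ C₂ : Set E} (hd : Disjoint C₁ C₂) (h₁ : G.Connected C₁) (h₂ : G.Connected C₂)
    (hF : F.Finite) : ∃ S, G.BalancedSplitOn c F S := by
  obtain ⟨N, M, φ, ι, hφι, hφ, hι, hφF, hcollapse⟩ :=
    G.exists_fin_minor (h₁.mono (subset_univ _)) hF
  have hminor {C : Set E} (hC : G.Connected C) : (G.minor φ ι hφι).Connected (ι ⁻¹' C) :=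
    hC.minor hφ fun e he a b hab => (hcollapse e a b hab).imp_right
      fun ⟨f, hf⟩ => ⟨f, by rwa [mem_preimage, hf], hf⟩
  obtain ⟨T₁, hT₁, hT₁tree⟩ := (hminor h₁).exists_isSpanningTree_subset
  obtain ⟨T₂, hT₂, hT₂tree⟩ := (hminor h₂).exists_isSpanningTree_subset
  obtain ⟨G₁, G₂, hunion, hdisj, hG₁, hG₂, hbal⟩ :=
    hfin N M _ ⟨T₁, T₂, (hd.preimage ι).mono hT₁ hT₂, hT₁tree, hT₂tree⟩
  obtain rfl : G₂ = G₁ᶜ := (IsCompl.compl_eq ⟨hdisj, codisjoint_iff.2 hunion⟩).symm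
  refine ⟨ι '' G₁, fun A hA hAc hAF => ?_, fun v hvF => ?_⟩
  · have hsat : ∀ a b, φ a = φ b → a ∈ A → b ∈ A := fun a b hab =>
      (((hφF a b).1 hab).mem_iff (disjoint_compl_left.mono_right hAF)).1
    obtain ⟨f₁, hf₁, hf₁A⟩ := hG₁.exists_mem_crossEdges_of_minor hA hAc hsat
    obtain ⟨f₂, hf₂, hf₂A⟩ := hG₂.exists_mem_crossEdges_of_minor hA hAc hsat
    exact ⟨⟨ι f₁, mem_image_of_mem ι hf₁, hf₁A⟩, ⟨ι f₂, hι.mem_set_image.not.2 hf₂, hf₂A⟩⟩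
  · have hv : ∀ x, φ x = φ v → x = v := fun x hx =>
      ((hφF v x).1 hx.symm).eq_of_incEdges_subset hvF
    have hrange : G.incEdges univ v ⊆ range ι := fun e ⟨_, hve⟩ => by
      obtain ⟨w, hw⟩ := Sym2.mem_iff_exists.1 hve
      refine (hcollapse e v w hw).resolve_left fun hvw => G.loopless e ?_
      rw [hw, hv w hvw.symm]
      exact Sym2.mk_isDiag_iff.2 rfl
    rw [deg_eq_deg_minor (hφι := hφι) hι hv hrange, deg_eq_deg_minor (hφι := hφι) hι hv hrange,
      preimage_compl, hι.preimage_image]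
    exact hbal (φ v)

theorem exists_semiconnected_balanced_of_locallyFinite {c : ℕ}
    (hfin : FinContainsDoubleTreeBalanced c) (hloc : ∀ v, (G.incEdges univ v).Finite)
    {C₁ C₂ : Set E} (hd : Disjoint C₁ C₂) (h₁ : G.Connected C₁) (h₂ : G.Connected C₂) :
    ∃ S, G.Semiconnected S ∧ G.Semiconnected Sᶜ ∧
      ∀ v, |(G.deg S v : ℤ) - (G.deg Sᶜ v : ℤ)| ≤ c := by
  obtain ⟨S, hS⟩ := exists_forall_finite_of_forall_finite (G.BalancedSplitOn c)
    (fun hKF hST h => h.restrict hKF hST) fun F hF => G.exists_balancedSplitOn hfin hd h₁ h₂ hF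
  exact ⟨S, fun A hA hAc hA' => ((hS _ hA').1 A hA hAc subset_rfl).1,
    fun A hA hAc hA' => ((hS _ hA').1 A hA hAc subset_rfl).2,
    fun v => (hS _ (hloc v)).2 v subset_rfl⟩

section Split

variable (G)

def InfiniteDegree (v : V) : Prop := (G.incEdges univ v).Infinite

/-- The vertices `(v, k)` of the graph in which every vertex `v` of infinite degree is replaced
by a ray `(v, 0), (v, 1), …`; a vertex of finite degree `v` survives as `(v, 0)`. -/
abbrev SplitVert : Type _ := {p : V × ℕ // G.InfiniteDegree p.1 ∨ p.2 = 0}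

/-- `(v, k, b)` is the rail of colour `b` joining `(v, k)` to `(v, k + 1)`. -/
abbrev Rail : Type _ := {v // G.InfiniteDegree v} × ℕ × Bool

variable {G} {B : ℕ} [NeZero B] {k : ℕ}

variable (G) in
def railsAt (v : V) (k : ℕ) : Set G.Rail := {r | r.1.1 = v ∧ (r.2.1 = k ∨ r.2.1 + 1 = k)}

theorem railsAt_injOn :
    InjOn (fun r : G.Rail => (decide (r.2.1 = k), r.2.2)) (G.railsAt v k) := by
  rintro ⟨w, j, b⟩ ⟨hw, hj⟩ ⟨w', j', b'⟩ ⟨hw', hj'⟩ h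
  dsimp only at hw hj hw' hj'
  simp only [Prod.mk.injEq, decide_eq_decide] at h
  obtain ⟨hjj, rfl⟩ := h
  obtain rfl : w = w' := Subtype.ext (hw.trans hw'.symm)
  obtain rfl : j = j' := by omega
  rfl

theorem finite_railsAt : (G.railsAt v k).Finite :=
  Finite.of_injOn (mapsTo_univ _ _) railsAt_injOn finite_univ

theorem ncard_railsAt_le : (G.railsAt v k).ncard ≤ 4 :=
  (ncard_le_ncard_of_injOn _ (fun _ _ => mem_univ _) railsAt_injOn).trans (by simp [ncard_univ])

variable [Countable E]

variable (B) in
noncomputable def blockEnum (hv : G.InfiniteDegree v) : G.incEdges univ v ≃ ℕ × Fin B :=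
  have := hv.to_subtype
  Classical.choice nonempty_equiv_of_countable

open Classical in
variable (G B) in
/-- The edges at a vertex of infinite degree are distributed in blocks of `B`, the `k`-th block
going to the ray vertex `(v, k)`. -/
noncomputable def blockIdx (v : V) (e : E) : ℕ :=
  if h : G.InfiniteDegree v ∧ e ∈ G.incEdges univ v then (blockEnum B h.1 ⟨e, h.2⟩).1 else 0

variable (G B) in
def block (v : V) (k : ℕ) : Set E := {e ∈ G.incEdges univ v | G.blockIdx B v e = k}

theorem blockIdx_of_not_infiniteDegree (hv : ¬G.InfiniteDegree v) (e : E) :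
    G.blockIdx B v e = 0 :=
  dif_neg fun h => hv h.1

theorem block_eq_range (hv : G.InfiniteDegree v) (k : ℕ) :
    G.block B v k = range fun i : Fin B => ((blockEnum B hv).symm (k, i)).1 := by
  ext e
  constructor
  · rintro ⟨he, rfl⟩
    refine ⟨(blockEnum B hv ⟨e, he⟩).2, ?_⟩
    simp [blockIdx, hv, he]
  · rintro ⟨i, rfl⟩
    refine ⟨((blockEnum B hv).symm (k, i)).2, ?_⟩
    simp [blockIdx, hv]

theorem finite_block (v : V) (k : ℕ) : (G.block B v k).Finite := by
  by_cases hv : G.InfiniteDegree v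
  · rw [block_eq_range hv]
    exact finite_range _
  · exact (not_infinite.1 hv).subset fun e he => he.1

theorem ncard_block (hv : G.InfiniteDegree v) (k : ℕ) : (G.block B v k).ncard = B := by
  rw [block_eq_range hv, ncard_range_of_injective, Nat.card_eq_fintype_card, Fintype.card_fin]
  intro i j hij
  simpa [Subtype.val_inj] using hij

variable (G B) in
noncomputable def liftVert (e : E) (v : V) : G.SplitVert :=
  ⟨(v, G.blockIdx B v e), (em _).imp_right fun hv => blockIdx_of_not_infiniteDegree hv e⟩

variable (G) in
def rayVert (v : {v // G.InfiniteDegree v}) (k : ℕ) : G.SplitVert :=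
  ⟨(v.1, k), .inl v.2⟩

variable (G B) in
noncomputable def split : Multigraph G.SplitVert (E ⊕ G.Rail) where
  ends
    | .inl e => (G.ends e).map (G.liftVert B e)
    | .inr (v, k, _) => s(G.rayVert v k, G.rayVert v (k + 1))
  loopless := by
    rintro (e | ⟨v, k, _⟩) h
    · exact G.loopless e ((Sym2.isDiag_map (f := G.liftVert B e)
        fun a b hab => congrArg (fun x : G.SplitVert => x.1.1) hab).1 h)
    · simp [rayVert] at h

theorem inl_mem_incEdges_split {S : Set (E ⊕ G.Rail)} {e : E} {hx} :
    .inl e ∈ (G.split B).incEdges S ⟨(v, k), hx⟩ ↔ .inl e ∈ S ∧ e ∈ G.block B v k := by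
  simp [incEdges, split, block, liftVert, Sym2.mem_map, and_comm]

theorem inr_mem_incEdges_split {S : Set (E ⊕ G.Rail)} {r : G.Rail} {hx} :
    .inr r ∈ (G.split B).incEdges S ⟨(v, k), hx⟩ ↔ .inr r ∈ S ∧ r ∈ G.railsAt v k := by
  obtain ⟨w, j, b⟩ := r
  simp [incEdges, split, railsAt, rayVert, eq_comm, and_or_left]

theorem incEdges_split_subset {S : Set (E ⊕ G.Rail)} {hx} :
    (G.split B).incEdges S ⟨(v, k), hx⟩ ⊆ .inl '' G.block B v k ∪ .inr '' G.railsAt v k := by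
  rintro (e | r) he
  · exact .inl ⟨e, (inl_mem_incEdges_split.1 he).2, rfl⟩
  · exact .inr ⟨r, (inr_mem_incEdges_split.1 he).2, rfl⟩

theorem finite_incEdges_split (x : G.SplitVert) : ((G.split B).incEdges univ x).Finite :=
  ((finite_block _ _).image _ |>.union (finite_railsAt.image _)).subset incEdges_split_subset

theorem crossEdges_split (A : Set V) :
    (G.split B).CrossEdges {x | x.1.1 ∈ A} = .inl '' G.CrossEdges A := by
  ext (e | ⟨w, j, b⟩)
  · rw [Sum.inl_injective.mem_set_image]
    refine (mem_crossEdges_preimage_iff (fun x : G.SplitVert => x.1.1)).trans ?_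
    rw [show ((G.split B).ends (.inl e)).map (fun x => x.1.1) = (G.ends e).map (fun x => x) by
      rw [split, Sym2.map_map]; rfl, Sym2.map_id', id]
    rfl
  · refine iff_of_false (fun h => ?_) (by simp)
    obtain ⟨a, ha, b, hb, hab⟩ := (mem_crossEdges_preimage_iff (fun x : G.SplitVert => x.1.1)).1 h
    simp only [split, rayVert, Sym2.map_mk, Sym2.eq_iff] at hab
    rcases hab with ⟨rfl, rfl⟩ | ⟨rfl, rfl⟩ <;> exact hb ha

theorem incEdges_split_of_not_infiniteDegree (hv : ¬G.InfiniteDegree v) (S : Set (E ⊕ G.Rail)) :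
    (G.split B).incEdges S ⟨(v, 0), .inr rfl⟩ = .inl '' G.incEdges (.inl ⁻¹' S) v := by
  ext (e | r)
  · rw [inl_mem_incEdges_split, Sum.inl_injective.mem_set_image]
    simp [block, incEdges, blockIdx_of_not_infiniteDegree hv]
  · refine iff_of_false (fun h => hv ?_) (by simp)
    exact (inr_mem_incEdges_split.1 h).2.1 ▸ r.1.2

theorem deg_split_of_not_infiniteDegree (hv : ¬G.InfiniteDegree v) (S : Set (E ⊕ G.Rail)) :
    (G.split B).deg S ⟨(v, 0), .inr rfl⟩ = G.deg (.inl ⁻¹' S) v := by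
  rw [deg, incEdges_split_of_not_infiniteDegree hv, ncard_image_of_injective _ Sum.inl_injective,
    deg]

theorem reachable_split_base (b : Bool) (x : G.SplitVert) :
    (G.split B).Reachable (.inr '' {r | r.2.2 = b}) x ⟨(x.1.1, 0), .inr rfl⟩ := by
  obtain ⟨⟨v, k⟩, hx⟩ := x
  induction k with
  | zero => exact .refl
  | succ k ih =>
    have hv : G.InfiniteDegree v := hx.resolve_right k.succ_ne_zero
    refine .head ⟨.inr (⟨v, hv⟩, k, b), mem_image_of_mem _ rfl, Sym2.eq_swap⟩ (ih (.inl hv))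

theorem connected_split {T : Set E} (hT : G.Connected T) (b : Bool) :
    (G.split B).Connected (.inl '' T ∪ .inr '' {r | r.2.2 = b}) := by
  set C : Set (E ⊕ G.Rail) := .inl '' T ∪ .inr '' {r | r.2.2 = b}
  have hbase (x : G.SplitVert) : (G.split B).Reachable C x ⟨(x.1.1, 0), .inr rfl⟩ :=
    (reachable_split_base b x).mono subset_union_right
  have hbase' (v w : V) : (G.split B).Reachable C ⟨(v, 0), .inr rfl⟩ ⟨(w, 0), .inr rfl⟩ :=
    (hT v w).lift (fun v => (⟨(v, 0), .inr rfl⟩ : G.SplitVert)) fun e he a a' hee =>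
      (hbase (G.liftVert B e a)).symm.trans <| .head
        ⟨.inl e, .inl (mem_image_of_mem _ he),
          show (G.ends e).map (G.liftVert B e) = _ by rw [hee, Sym2.map_mk]⟩
        (hbase (G.liftVert B e a'))
  exact fun x y => (hbase x).trans ((hbase' _ _).trans (hbase y).symm)

theorem Semiconnected.of_split {S : Set (E ⊕ G.Rail)} (h : (G.split B).Semiconnected S) :
    G.Semiconnected (.inl ⁻¹' S) := by
  intro A ⟨a, ha⟩ ⟨b, hb⟩ hA
  obtain ⟨_, hS, he⟩ := h {x | x.1.1 ∈ A} ⟨⟨(a, 0), .inr rfl⟩, ha⟩ ⟨⟨(b, 0), .inr rfl⟩, hb⟩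
    (by rw [crossEdges_split]; exact hA.image _)
  rw [crossEdges_split] at he
  obtain ⟨e, he, rfl⟩ := he
  exact ⟨e, hS, he⟩

/-- A ray vertex carries `B` edges of `G` but at most four rails. -/
theorem exists_mem_block_of_abs_deg_sub_le {c : ℕ} (hB : c + 4 < B) {v : V}
    (hv : G.InfiniteDegree v) (k : ℕ) {S T : Set (E ⊕ G.Rail)} (hST : ∀ e, e ∈ S ∨ e ∈ T)
    (hbal : |((G.split B).deg S ⟨(v, k), .inl hv⟩ : ℤ) - (G.split B).deg T ⟨(v, k), .inl hv⟩| ≤ c) :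
    ∃ e ∈ G.block B v k, .inl e ∈ S := by
  by_contra! hno
  have hS : (G.split B).deg S ⟨(v, k), .inl hv⟩ ≤ 4 := by
    refine (ncard_le_ncard (t := .inr '' G.railsAt v k) ?_ (finite_railsAt.image _)).trans ?_
    · rintro (e | r) he
      · exact absurd (inl_mem_incEdges_split.1 he).1 (hno e (inl_mem_incEdges_split.1 he).2)
      · exact ⟨r, (inr_mem_incEdges_split.1 he).2, rfl⟩
    · exact (ncard_image_le finite_railsAt).trans ncard_railsAt_le
  have hT : B ≤ (G.split B).deg T ⟨(v, k), .inl hv⟩ := by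
    refine (ncard_block (B := B) hv k).symm.trans_le ?_
    rw [← ncard_image_of_injective _ Sum.inl_injective]
    refine ncard_le_ncard (fun _ ⟨e, he, hee⟩ => hee ▸ ?_)
      ((finite_incEdges_split _).subset (incEdges_mono (subset_univ _)))
    exact inl_mem_incEdges_split.2 ⟨(hST _).resolve_left (hno e he), he⟩
  rw [abs_le] at hbal
  omega

theorem infinite_incEdges_of_forall_block {S : Set E} {v : V}
    (h : ∀ k, ∃ e ∈ G.block B v k, e ∈ S) : (G.incEdges S v).Infinite := by
  choose f hf hfS using h
  refine infinite_of_injective_forall_mem (fun k k' hkk' => ?_) fun k => ⟨hfS k, (hf k).1.2⟩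
  rw [← (hf k).2, ← (hf k').2, hkk']

theorem balancedOrInfinite_of_split {c : ℕ} (hB : c + 4 < B) {S : Set (E ⊕ G.Rail)}
    (hbal : ∀ x, |((G.split B).deg S x : ℤ) - (G.split B).deg Sᶜ x| ≤ c) :
    G.BalancedOrInfinite c (.inl ⁻¹' S) (.inl ⁻¹' Sᶜ) := by
  intro v
  by_cases hv : G.InfiniteDegree v
  · refine .inl ⟨infinite_incEdges_of_forall_block (B := B) fun k => ?_,
      infinite_incEdges_of_forall_block (B := B) fun k => ?_⟩
    · exact exists_mem_block_of_abs_deg_sub_le hB hv k (fun e => em (e ∈ S)) (hbal _)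
    · exact exists_mem_block_of_abs_deg_sub_le hB hv k (fun e => (em (e ∈ S)).symm)
        (abs_sub_comm (α := ℤ) _ _ ▸ hbal _)
  · have hfin : (G.incEdges univ v).Finite := not_infinite.1 hv
    refine .inr ⟨hfin.subset (incEdges_mono (subset_univ _)),
      hfin.subset (incEdges_mono (subset_univ _)), ?_⟩
    rw [← deg_split_of_not_infiniteDegree (B := B) hv,
      ← deg_split_of_not_infiniteDegree (B := B) hv]
    exact hbal _

end Split

end Multigraph

theorem infinite_general_semiconnected_balanced_general (c : ℕ)
    (hc : IsLeast {c' : ℕ | FinContainsDoubleTreeBalanced c'} c)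
    {V E : Type*} [Countable E]
    (G : Multigraph V E)
    (hG : ∃ T1 T2 : Set E, Disjoint T1 T2 ∧ G.IsSpanningTree T1 ∧ G.IsSpanningTree T2) :
    ∃ S1 S2 : Set E, S1 ∪ S2 = Set.univ ∧ Disjoint S1 S2 ∧
      G.Semiconnected S1 ∧ G.Semiconnected S2 ∧
      G.BalancedOrInfinite c S1 S2 := by
  obtain ⟨T1, T2, hT, hT1, hT2⟩ := hG
  have hrails : Disjoint (Sum.inl '' T1 ∪ Sum.inr '' {r : G.Rail | r.2.2 = true})
      (Sum.inl '' T2 ∪ Sum.inr '' {r | r.2.2 = false}) := by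
    simp only [Set.disjoint_union_left, Set.disjoint_union_right, Set.disjoint_image_inl_image_inr,
      (Set.disjoint_image_inl_image_inr).symm, Set.disjoint_image_iff Sum.inl_injective,
      Set.disjoint_image_iff Sum.inr_injective, hT, true_and, and_true]
    exact Set.disjoint_left.2 fun r h h' => by simp_all
  obtain ⟨S, hS, hSc, hbal⟩ := (G.split (c + 5)).exists_semiconnected_balanced_of_locallyFinite
    hc.1 (Multigraph.finite_incEdges_split (B := c + 5)) hrails
    (Multigraph.connected_split hT1.1 true) (Multigraph.connected_split hT2.1 false)
  refine ⟨Sum.inl ⁻¹' S, Sum.inl ⁻¹' Sᶜ, ?_, ?_, hS.of_split, hSc.of_split,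
    Multigraph.balancedOrInfinite_of_split (by omega) hbal⟩
  · rw [Set.preimage_compl, Set.union_compl_self]
  · rw [Set.preimage_compl]
    exact disjoint_compl_right

/-- **Theorem (Statement 4).** Let `c` be the minimal integer such that every
finite graph containing a spanning double tree has a `c`-balanced decomposition
into two connected spanning subgraphs.  Then every countably infinite graph
containing a spanning double tree has an edge partition into two semiconnected
spanning subgraphs whose degrees at each vertex are both infinite or differ by
at most `c`. -/
theorem infinite_general_semiconnected_balanced (c : ℕ)
    (hc : IsLeast {c' : ℕ | FinContainsDoubleTreeBalanced c'} c)
    {V E : Type*} [Countable V] [Infinite V] [Countable E]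
    (G : Multigraph V E)
    (hG : ∃ T1 T2 : Set E, Disjoint T1 T2 ∧ G.IsSpanningTree T1 ∧ G.IsSpanningTree T2) :
    ∃ S1 S2 : Set E, S1 ∪ S2 = Set.univ ∧ Disjoint S1 S2 ∧
      G.Semiconnected S1 ∧ G.Semiconnected S2 ∧
      G.BalancedOrInfinite c S1 S2 :=
  infinite_general_semiconnected_balanced_general c hc G hG
end

section
/- Fix an integer c ≥ 2 and let G be a finite double tree with no c-balanced double tree decomposition that has the minimum number of vertices among all such double trees. Then every big vertex of G is adjacent to at most one vertex of degree 2. -/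
namespace Multigraph

variable {V E : Type*}

/-- `G` admits no `c`-balanced double tree decomposition. -/
def NoBalancedDTD (c : ℕ) (G : Multigraph V E) : Prop :=
  ¬ ∃ T1 T2 : Set E, G.IsDTD T1 T2 ∧ G.Balanced c T1 T2

/-- `v` is big: its degree exceeds `c + 2`. -/
def Big (G : Multigraph V E) (c : ℕ) (v : V) : Prop :=
  c + 2 < G.deg Set.univ v

/-- `v` is small: its degree is at most `c + 2`. -/
def Small (G : Multigraph V E) (c : ℕ) (v : V) : Prop :=
  G.deg Set.univ v ≤ c + 2

/-- `u` and `z` are joined by a double edge. -/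
def DoubleEdge (G : Multigraph V E) (u z : V) : Prop :=
  ∃ e1 e2 : E, e1 ≠ e2 ∧ G.ends e1 = s(u, z) ∧ G.ends e2 = s(u, z)

/-- `u` is a bad 3-vertex: it has degree 3, a small neighbour, and is joined
to a big vertex by a double edge. -/
def Bad3 (G : Multigraph V E) (c : ℕ) (u : V) : Prop :=
  G.deg Set.univ u = 3 ∧
  (∃ w, G.Adj Set.univ u w ∧ G.Small c w) ∧
  (∃ z, G.DoubleEdge u z ∧ G.Big c z)

/-- `u` is a poor 3-vertex: it has degree 3 and three distinct neighbours,
two big and one small. -/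
def Poor3 (G : Multigraph V E) (c : ℕ) (u : V) : Prop :=
  G.deg Set.univ u = 3 ∧
  ∃ x y s : V, x ≠ y ∧ x ≠ s ∧ y ≠ s ∧
    G.Adj Set.univ u x ∧ G.Adj Set.univ u y ∧ G.Adj Set.univ u s ∧
    G.Big c x ∧ G.Big c y ∧ G.Small c s

end Multigraph
namespace Multigraph

variable {V E : Type*}

variable {G : Multigraph V E}

lemma adj_symm {S : Set E} {a b : V} (h : G.Adj S a b) : G.Adj S b a := by
  obtain ⟨e, he, hend⟩ := h
  exact ⟨e, he, by rw [hend, Sym2.eq_swap]⟩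

lemma reach_symm {S : Set E} {a b : V} (h : G.Reachable S a b) : G.Reachable S b a := by
  induction h with
  | refl => exact .refl
  | tail _ h2 ih => exact Relation.ReflTransGen.head (adj_symm h2) ih

lemma reach_mono {S S' : Set E} (hss : S ⊆ S') {a b : V} (h : G.Reachable S a b) :
    G.Reachable S' a b := by
  induction h with
  | refl => exact .refl
  | tail _ h2 ih => exact ih.tail (by obtain ⟨e, he, hend⟩ := h2; exact ⟨e, hss he, hend⟩)

lemma reach_closed {S : Set E} {C : Set V} (hC : ∀ p q, p ∈ C → G.Adj S p q → q ∈ C)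
    {a b : V} (ha : a ∈ C) (h : G.Reachable S a b) : b ∈ C := by
  induction h with
  | refl => exact ha
  | tail _ h2 ih => exact hC _ _ ih h2

lemma reach_isolated {S : Set E} {a b : V} (h0 : ∀ e ∈ S, a ∉ G.ends e)
    (h : G.Reachable S a b) : a = b := by
  have : b ∈ ({a} : Set V) := by
    refine reach_closed (fun p q hp hadj => ?_) rfl h
    obtain ⟨e, he, hend⟩ := hadj
    simp only [Set.mem_singleton_iff] at hp
    exact absurd (by rw [hend, Sym2.mem_iff]; exact Or.inl hp.symm) (h0 e he)
  exact this.symm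

lemma mem_ends_other {e : E} {p : V} (h : p ∈ G.ends e) : ∃ q, G.ends e = s(p, q) ∧ p ≠ q := by
  obtain ⟨a, b, hab⟩ : ∃ a b, G.ends e = s(a, b) := by
    induction (G.ends e) using Sym2.ind with | _ a b => exact ⟨a, b, rfl⟩
  have hd := G.loopless e
  rw [hab, Sym2.mem_iff] at h
  rw [hab, Sym2.mk_isDiag_iff] at hd
  rcases h with h | h
  · exact ⟨b, by rw [hab, h], h ▸ hd⟩
  · exact ⟨a, by rw [hab, h, Sym2.eq_swap], fun hpa => hd (by rw [← h, hpa])⟩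

lemma exists_edge_at {S : Set E} {p q : V} (h : G.Reachable S p q) (hpq : p ≠ q) :
    ∃ e ∈ S, p ∈ G.ends e := by
  rcases Relation.ReflTransGen.cases_head h with h | ⟨c, hadj, _⟩
  · exact absurd h hpq
  · obtain ⟨e, he, hend⟩ := hadj
    exact ⟨e, he, by rw [hend]; exact Sym2.mem_mk_left _ _⟩

/-- Removing the unique edge at `x` keeps reachability between vertices other than `x`. -/
lemma reach_avoid {T : Set E} {e0 : E} {x a : V} (hxa : G.ends e0 = s(x, a)) (hne : x ≠ a)
    (huniq : ∀ g ∈ T, x ∈ G.ends g → g = e0) {p q : V} (hp : p ≠ x) (hq : q ≠ x)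
    (h : G.Reachable T p q) : G.Reachable (T \ {e0}) p q := by
  have main : ∀ r, G.Reachable T p r →
      (r ≠ x → G.Reachable (T \ {e0}) p r) ∧ (r = x → G.Reachable (T \ {e0}) p a) := by
    intro r hr
    induction hr with
    | refl => exact ⟨fun _ => .refl, fun h => absurd h hp⟩
    | @tail r' r _ h2 ih =>
      obtain ⟨g, hg, hend⟩ := h2
      constructor
      · intro hrx
        by_cases hr'x : r' = x
        · have hge : g = e0 := huniq g hg (by rw [hend, hr'x]; exact Sym2.mem_mk_left _ _)
          have hs : s(x, a) = s(r', r) := by rw [← hxa, ← hge]; exact hend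
          have hra : r = a := by
            rcases Sym2.eq_iff.1 hs with ⟨_, h2'⟩ | ⟨h1', _⟩
            · exact h2'.symm
            · exact absurd h1'.symm hrx
          have := ih.2 hr'x
          rwa [← hra] at this
        · have hge : g ≠ e0 := by
            intro hge
            have hs : s(x, a) = s(r', r) := by rw [← hxa, ← hge]; exact hend
            rcases Sym2.eq_iff.1 hs with ⟨h1', _⟩ | ⟨h1', _⟩
            · exact hr'x h1'.symm
            · exact hrx h1'.symm
          exact (ih.1 hr'x).tail ⟨g, ⟨hg, hge⟩, hend⟩
      · intro hrx
        have hge : g = e0 := huniq g hg (by rw [hend, hrx]; exact Sym2.mem_mk_right _ _)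
        have hs : s(x, a) = s(r', r) := by rw [← hxa, ← hge]; exact hend
        have hr'a : r' = a := by
          rcases Sym2.eq_iff.1 hs with ⟨h1', h2'⟩ | ⟨h1', h2'⟩
          · exact absurd (h2'.trans hrx).symm hne
          · exact h2'.symm
        have hr'ne : r' ≠ x := fun h => hne (h.symm.trans hr'a)
        exact hr'a ▸ ih.1 hr'ne
  exact (main q h).1 hq

lemma acyclic_subset {S T : Set E} (hst : S ⊆ T) (h : G.Acyclic T) : G.Acyclic S := by
  intro e he a b hend hr
  exact h e (hst he) a b hend (reach_mono (by intro z hz; exact ⟨hst hz.1, hz.2⟩) hr)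

/-- Attaching a pendant edge `gx = s(x,cx)` to an edge set `B` not touching `x`
yields a spanning tree, provided `B` spans and is acyclic away from `x`. -/
lemma spanningTree_extend1 {B : Set E} {gx : E} {x cx : V}
    (hB : ∀ e ∈ B, x ∉ G.ends e) (hgB : gx ∉ B)
    (hgx : G.ends gx = s(x, cx)) (hcx : x ≠ cx)
    (hconn : ∀ p q : V, p ≠ x → q ≠ x → G.Reachable B p q)
    (hacyc : ∀ g ∈ B, ∀ p q : V, G.ends g = s(p, q) → ¬ G.Reachable (B \ {g}) p q) :
    G.IsSpanningTree (B ∪ {gx}) := by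
  have hsub : B ⊆ B ∪ {gx} := Set.subset_union_left
  have reach_cx : ∀ w : V, G.Reachable (B ∪ {gx}) w cx := by
    intro w
    by_cases hw : w = x
    · subst hw
      exact Relation.ReflTransGen.head ⟨gx, Or.inr rfl, hgx⟩ .refl
    · exact reach_mono hsub (hconn w cx hw (Ne.symm hcx))
  constructor
  · intro p q
    exact (reach_cx p).trans (reach_symm (reach_cx q))
  · intro g hg p q hend hr
    have huniqx : ∀ h' ∈ (B ∪ {gx}) \ {g}, x ∈ G.ends h' → h' = gx := by
      intro h' hh' hx
      rcases hh'.1 with h | h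
      · exact absurd hx (hB h' h)
      · exact h
    rcases hg with hgBmem | hggx
    · -- g ∈ B
      have hpx : p ≠ x := fun h => hB g hgBmem (by rw [hend, h]; exact Sym2.mem_mk_left _ _)
      have hqx : q ≠ x := fun h => hB g hgBmem (by rw [hend, h]; exact Sym2.mem_mk_right _ _)
      have hr2 := reach_avoid hgx hcx huniqx hpx hqx hr
      have : ((B ∪ {gx}) \ {g}) \ {gx} ⊆ B \ {g} := by
        intro z hz
        rcases hz.1.1 with h | h
        · exact ⟨h, hz.1.2⟩
        · exact absurd h hz.2
      exact hacyc g hgBmem p q hend (reach_mono this hr2)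
    · -- g = gx
      obtain rfl : g = gx := hggx
      have hiso : ∀ e ∈ (B ∪ {g}) \ {g}, x ∉ G.ends e := by
        intro e he
        rcases he.1 with h | h
        · exact hB e h
        · exact absurd h he.2
      rw [hgx] at hend
      rcases Sym2.eq_iff.1 hend with ⟨h1, h2⟩ | ⟨h1, h2⟩
      · subst h1; subst h2
        exact hcx (reach_isolated hiso hr)
      · subst h1; subst h2
        exact hcx (reach_isolated hiso (reach_symm hr))

lemma spanningTree_extend2 {B : Set E} {gx gy : E} {x y cx cy : V}
    (hxy : x ≠ y)
    (hB : ∀ e ∈ B, x ∉ G.ends e ∧ y ∉ G.ends e) (hgxB : gx ∉ B) (hgyB : gy ∉ B)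
    (hgxgy : gx ≠ gy)
    (hgx : G.ends gx = s(x, cx)) (hgy : G.ends gy = s(y, cy))
    (hcx : cx ≠ x ∧ cx ≠ y) (hcy : cy ≠ x ∧ cy ≠ y)
    (hconn : ∀ p q : V, p ≠ x → p ≠ y → q ≠ x → q ≠ y → G.Reachable B p q)
    (hacyc : ∀ g ∈ B, ∀ p q : V, G.ends g = s(p, q) → ¬ G.Reachable (B \ {g}) p q) :
    G.IsSpanningTree (B ∪ {gx, gy}) := by
  have hBy : ∀ e ∈ B ∪ {gy}, x ∉ G.ends e := by
    intro e he
    rcases he with h | h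
    · exact (hB e h).1
    · rcases h
      rw [hgy, Sym2.mem_iff]
      push_neg
      exact ⟨hxy, Ne.symm hcy.1⟩
  have key := spanningTree_extend1 (G := G) (B := B ∪ {gy}) (gx := gx) (x := x) (cx := cx)
    hBy
    (by rintro (h | h); exact hgxB h; exact hgxgy h)
    hgx (Ne.symm hcx.1)
    (by
      intro p q hpx hqx
      have reach_cy : ∀ w : V, w ≠ x → G.Reachable (B ∪ {gy}) w cy := by
        intro w hw
        by_cases hwy : w = y
        · subst hwy
          exact Relation.ReflTransGen.head ⟨gy, Or.inr rfl, hgy⟩ .refl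
        · exact reach_mono Set.subset_union_left (hconn w cy hw hwy hcy.1 hcy.2)
      exact (reach_cy p hpx).trans (reach_symm (reach_cy q hqx)))
    (by
      intro g hg p q hend hr
      rcases hg with hgBmem | hggy
      · -- g ∈ B : remove gy via reach_avoid at y
        have hpy : p ≠ y := fun h => (hB g hgBmem).2 (by rw [hend, h]; exact Sym2.mem_mk_left _ _)
        have hqy : q ≠ y := fun h => (hB g hgBmem).2 (by rw [hend, h]; exact Sym2.mem_mk_right _ _)
        have huniqy : ∀ h' ∈ (B ∪ {gy}) \ {g}, y ∈ G.ends h' → h' = gy := by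
          intro h' hh' hy
          rcases hh'.1 with h | h
          · exact absurd hy (hB h' h).2
          · exact h
        have hr2 := reach_avoid hgy (Ne.symm hcy.2) huniqy hpy hqy hr
        have : ((B ∪ {gy}) \ {g}) \ {gy} ⊆ B \ {g} := by
          intro z hz
          rcases hz.1.1 with h | h
          · exact ⟨h, hz.1.2⟩
          · exact absurd h hz.2
        exact hacyc g hgBmem p q hend (reach_mono this hr2)
      · obtain rfl : g = gy := hggy
        have hiso : ∀ e ∈ (B ∪ {g}) \ {g}, y ∉ G.ends e := by
          intro e he
          rcases he.1 with h | h
          · exact (hB e h).2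
          · exact absurd h he.2
        rw [hgy] at hend
        rcases Sym2.eq_iff.1 hend with ⟨h1, h2⟩ | ⟨h1, h2⟩
        · subst h1; subst h2
          exact (Ne.symm hcy.2) (reach_isolated hiso hr)
        · subst h1; subst h2
          exact (Ne.symm hcy.2) (reach_isolated hiso (reach_symm hr)))
  have : B ∪ {gy} ∪ {gx} = B ∪ {gx, gy} := by
    ext z; simp only [Set.mem_union, Set.mem_singleton_iff, Set.mem_insert_iff]; tauto
  rwa [this] at key

end Multigraph

/-- **Theorem (Statement 7).** In a vertex-minimal double tree `G` with no
`c`-balanced double tree decomposition (`c ≥ 2`), every big vertex is adjacent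
to at most one vertex of degree 2. -/
theorem big_vertex_at_most_one_two_vertex (c : ℕ) (hc : 2 ≤ c) (n m : ℕ)
    (G : Multigraph (Fin n) (Fin m))
    (hG : G.IsDoubleTree) (hbal : G.NoBalancedDTD c)
    (hmin : ∀ (n' m' : ℕ) (G' : Multigraph (Fin n') (Fin m')),
      G'.IsDoubleTree → G'.NoBalancedDTD c → n ≤ n')
    (v : Fin n) (hbig : G.Big c v) :
    ∀ x y : Fin n, G.Adj Set.univ v x → G.Adj Set.univ v y →
      G.deg Set.univ x = 2 → G.deg Set.univ y = 2 → x = y := by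
  classical
  intro x y hax hay hdx hdy
  by_contra hxy
  have hbig' : c + 2 < G.deg Set.univ v := hbig
  have hvx : v ≠ x := by intro h; rw [h, hdx] at hbig'; omega
  have hvy : v ≠ y := by intro h; rw [h, hdy] at hbig'; omega
  obtain ⟨e1, -, he1⟩ := hax
  obtain ⟨f1, -, hf1⟩ := hay
  -- the two edges at x and at y
  have hdx' : (G.incEdges Set.univ x).ncard = 2 := hdx
  have hdy' : (G.incEdges Set.univ y).ncard = 2 := hdy
  have he1mem : e1 ∈ G.incEdges Set.univ x :=
    ⟨Set.mem_univ _, by rw [he1]; exact Sym2.mem_mk_right _ _⟩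
  have hf1mem : f1 ∈ G.incEdges Set.univ y :=
    ⟨Set.mem_univ _, by rw [hf1]; exact Sym2.mem_mk_right _ _⟩
  have hxEx : ∃ e2, e1 ≠ e2 ∧ G.incEdges Set.univ x = {e1, e2} := by
    obtain ⟨p, q, hpq, hset⟩ := Set.ncard_eq_two.1 hdx'
    rw [hset] at he1mem
    rcases he1mem with h | h
    · exact ⟨q, by rw [h]; exact hpq, by rw [hset, h]⟩
    · refine ⟨p, by rw [h]; exact hpq.symm, by rw [hset, h, Set.pair_comm]⟩
  obtain ⟨e2, he12, hxset⟩ := hxEx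
  have hyEx : ∃ f2, f1 ≠ f2 ∧ G.incEdges Set.univ y = {f1, f2} := by
    obtain ⟨p, q, hpq, hset⟩ := Set.ncard_eq_two.1 hdy'
    rw [hset] at hf1mem
    rcases hf1mem with h | h
    · exact ⟨q, by rw [h]; exact hpq, by rw [hset, h]⟩
    · refine ⟨p, by rw [h]; exact hpq.symm, by rw [hset, h, Set.pair_comm]⟩
  obtain ⟨f2, hf12, hyset⟩ := hyEx
  have he2x : x ∈ G.ends e2 :=
    (show e2 ∈ G.incEdges Set.univ x by rw [hxset]; right; rfl).2
  have hf2y : y ∈ G.ends f2 :=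
    (show f2 ∈ G.incEdges Set.univ y by rw [hyset]; right; rfl).2
  obtain ⟨a, he2, hxa⟩ := Multigraph.mem_ends_other he2x
  obtain ⟨b, hf2, hyb⟩ := Multigraph.mem_ends_other hf2y
  have hxedge : ∀ e, x ∈ G.ends e → e = e1 ∨ e = e2 := by
    intro e he
    have : e ∈ ({e1, e2} : Set (Fin m)) := hxset ▸ (⟨Set.mem_univ e, he⟩ : e ∈ G.incEdges Set.univ x)
    simpa using this
  have hyedge : ∀ e, y ∈ G.ends e → e = f1 ∨ e = f2 := by
    intro e he
    have : e ∈ ({f1, f2} : Set (Fin m)) := hyset ▸ (⟨Set.mem_univ e, he⟩ : e ∈ G.incEdges Set.univ y)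
    simpa using this
  -- distinctness of edges
  have he1f1 : e1 ≠ f1 := by
    intro h
    rw [h, hf1] at he1
    rcases Sym2.eq_iff.1 he1 with ⟨-, h2⟩ | ⟨h1, -⟩
    · exact hxy h2.symm
    · exact hvx h1
  have he1f2 : e1 ≠ f2 := by
    intro h
    rw [h, hf2] at he1
    rcases Sym2.eq_iff.1 he1 with ⟨h1, -⟩ | ⟨h1, -⟩
    · exact hvy h1.symm
    · exact hxy h1.symm
  have he2f1 : e2 ≠ f1 := by
    intro h
    rw [h, hf1] at he2
    rcases Sym2.eq_iff.1 he2 with ⟨h1, -⟩ | ⟨-, h2⟩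
    · exact hvx h1
    · exact hxy h2.symm
  -- the double tree decomposition of G
  obtain ⟨T1, T2, hUn, hDisj, hT1, hT2⟩ := hG
  have htreex : ∀ T : Set (Fin m), G.IsSpanningTree T → e1 ∈ T ∨ e2 ∈ T := by
    intro T hT
    obtain ⟨e, heT, hex⟩ := Multigraph.exists_edge_at (hT.1 x v) (Ne.symm hvx)
    rcases hxedge e hex with rfl | rfl
    · exact Or.inl heT
    · exact Or.inr heT
  have htreey : ∀ T : Set (Fin m), G.IsSpanningTree T → f1 ∈ T ∨ f2 ∈ T := by
    intro T hT
    obtain ⟨e, heT, hey⟩ := Multigraph.exists_edge_at (hT.1 y v) (Ne.symm hvy)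
    rcases hyedge e hey with rfl | rfl
    · exact Or.inl heT
    · exact Or.inr heT
  have hndd : ∀ e : Fin m, e ∈ T1 → e ∈ T2 → False := by
    intro e h1 h2
    exact Set.disjoint_left.1 hDisj h1 h2
  have hx12 : (e1 ∈ T1 ∧ e2 ∈ T2) ∨ (e1 ∈ T2 ∧ e2 ∈ T1) := by
    rcases htreex T1 hT1 with h1 | h1 <;> rcases htreex T2 hT2 with h2 | h2
    · exact absurd h2 (fun h => hndd e1 h1 h)
    · exact Or.inl ⟨h1, h2⟩
    · exact Or.inr ⟨h2, h1⟩
    · exact absurd h2 (fun h => hndd e2 h1 h)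
  have hy12 : (f1 ∈ T1 ∧ f2 ∈ T2) ∨ (f1 ∈ T2 ∧ f2 ∈ T1) := by
    rcases htreey T1 hT1 with h1 | h1 <;> rcases htreey T2 hT2 with h2 | h2
    · exact absurd h2 (fun h => hndd f1 h1 h)
    · exact Or.inl ⟨h1, h2⟩
    · exact Or.inr ⟨h2, h1⟩
    · exact absurd h2 (fun h => hndd f2 h1 h)
  -- a ≠ y (no triangle through the two degree-2 vertices)
  have hay2 : a ≠ y := by
    intro hayeq
    have he2f2 : e2 = f2 := by
      rcases hyedge e2 (by rw [he2, hayeq]; exact Sym2.mem_mk_right _ _) with h | h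
      · exact absurd h he2f1
      · exact h
    -- the tree containing e2 traps {x, y}
    have main : ∀ T : Set (Fin m), G.IsSpanningTree T → e2 ∈ T → e1 ∉ T → f1 ∉ T → False := by
      intro T hT he2T he1T hf1T
      have hclosed : ∀ p q, p ∈ ({x, y} : Set (Fin n)) → G.Adj T p q → q ∈ ({x, y} : Set (Fin n)) := by
        intro p q hp hadj
        obtain ⟨g, hgT, hend⟩ := hadj
        rcases hp with hp | hp
        · -- p = x
          have hgx : x ∈ G.ends g := by rw [hend, hp]; exact Sym2.mem_mk_left _ _
          rcases hxedge g hgx with rfl | rfl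
          · exact absurd hgT he1T
          · rw [he2, hayeq] at hend
            rcases Sym2.eq_iff.1 hend with ⟨-, h2⟩ | ⟨h1, -⟩
            · exact Or.inr h2.symm
            · exact Or.inl h1.symm
        · -- p = y
          have hgy : y ∈ G.ends g := by rw [hend, hp]; exact Sym2.mem_mk_left _ _
          rcases hyedge g hgy with rfl | rfl
          · exact absurd hgT hf1T
          · rw [← he2f2, he2, hayeq] at hend
            rcases Sym2.eq_iff.1 hend with ⟨h1, -⟩ | ⟨h1, -⟩
            · exact absurd (h1.trans hp) hxy
            · exact Or.inl h1.symm
      have := Multigraph.reach_closed hclosed (Or.inl rfl) (hT.1 x v)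
      rcases this with h | h
      · exact hvx h
      · exact hvy h
    rcases hx12 with ⟨h1, h2⟩ | ⟨h1, h2⟩
    · -- e2 ∈ T2, e1 ∈ T1 so e1 ∉ T2; f1: e2 = f2 ∈ T2 so f1 ∈ T1, f1 ∉ T2
      have hf1T2 : f1 ∉ T2 := by
        rcases hy12 with ⟨hh1, hh2⟩ | ⟨hh1, hh2⟩
        · exact fun h => hndd f1 hh1 h
        · exact fun _ => (hndd f2 hh2 (he2f2 ▸ h2)).elim
      exact main T2 hT2 h2 (fun h => hndd e1 h1 h) hf1T2
    · have hf1T1 : f1 ∉ T1 := by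
        rcases hy12 with ⟨hh1, hh2⟩ | ⟨hh1, hh2⟩
        · exact fun _ => (hndd f2 (he2f2 ▸ h2) hh2).elim
        · exact fun h => hndd f1 h hh1
      exact main T1 hT1 h2 (fun h => hndd e1 h h1) hf1T1
  have hbx : b ≠ x := by
    intro hbxeq
    rcases hxedge f2 (by rw [hf2, hbxeq]; exact Sym2.mem_mk_right _ _) with h | h
    · exact he1f2 h.symm
    · rw [← h, hf2, hbxeq] at he2
      rcases Sym2.eq_iff.1 he2 with ⟨h1, -⟩ | ⟨h1, -⟩
      · exact hxy h1.symm
      · exact hay2 h1.symm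
  have he2f2 : e2 ≠ f2 := by
    intro h
    rw [h, hf2] at he2
    rcases Sym2.eq_iff.1 he2 with ⟨h1, -⟩ | ⟨-, h2⟩
    · exact hxy h1.symm
    · exact hbx h2
  -- edges not at x / not at y
  have hxends : ∀ e : Fin m, e ≠ e1 → e ≠ e2 → x ∉ G.ends e := by
    intro e h1 h2 hx
    rcases hxedge e hx with h | h
    · exact h1 h
    · exact h2 h
  have hyends : ∀ e : Fin m, e ≠ f1 → e ≠ f2 → y ∉ G.ends e := by
    intro e h1 h2 hy
    rcases hyedge e hy with h | h
    · exact h1 h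
    · exact h2 h
  have he2P : e2 ≠ e1 ∧ e2 ≠ f1 := ⟨Ne.symm he12, he2f1⟩
  have hf2P : f2 ≠ e1 ∧ f2 ≠ f1 := ⟨Ne.symm he1f2, Ne.symm hf12⟩
  -- vertex renaming
  obtain ⟨k, hkinj, hksurj⟩ :
      ∃ k : Fin n → Fin (n - 1),
        (∀ w w', w ≠ y → w' ≠ y → k w = k w' → w = w') ∧
        (∀ p', ∃ w, w ≠ y ∧ k w = p') := by
    have hcard : Fintype.card {w : Fin n // w ≠ y} = n - 1 := by
      simp [Fintype.card_subtype_compl]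
    have φ := Fintype.equivFinOfCardEq hcard
    refine ⟨fun w => if h : w = y then φ ⟨v, hvy⟩ else φ ⟨w, h⟩, ?_, ?_⟩
    · intro w w' hw hw' h
      simp only [dif_neg hw, dif_neg hw'] at h
      exact congrArg Subtype.val (φ.injective h)
    · intro p'
      refine ⟨(φ.symm p').1, (φ.symm p').2, ?_⟩
      simp only [dif_neg (φ.symm p').2]
      exact φ.apply_symm_apply p'
  -- edge renaming
  obtain ⟨iot, hiinj, hisurj⟩ :
      ∃ ι : Fin m → Fin (m - 2),
        (∀ e e', (e ≠ e1 ∧ e ≠ f1) → (e' ≠ e1 ∧ e' ≠ f1) → ι e = ι e' → e = e') ∧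
        (∀ j, ∃ e, (e ≠ e1 ∧ e ≠ f1) ∧ ι e = j) := by
    have hcard : Fintype.card {e : Fin m // e ≠ e1 ∧ e ≠ f1} = m - 2 := by
      rw [Fintype.card_subtype]
      rw [show (Finset.univ.filter (fun e : Fin m => e ≠ e1 ∧ e ≠ f1))
          = (Finset.univ.erase e1).erase f1 by ext z; simp [and_comm]]
      rw [Finset.card_erase_of_mem (by simp [he1f1.symm]), Finset.card_erase_of_mem (by simp)]
      simp only [Finset.card_univ, Fintype.card_fin]
      omega
    have ψ := Fintype.equivFinOfCardEq hcard
    refine ⟨fun e => if h : e ≠ e1 ∧ e ≠ f1 then ψ ⟨e, h⟩ else ψ ⟨e2, he2P⟩, ?_, ?_⟩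
    · intro e e' he he' h
      simp only [dif_pos he, dif_pos he'] at h
      exact congrArg Subtype.val (ψ.injective h)
    · intro j
      refine ⟨(ψ.symm j).1, (ψ.symm j).2, ?_⟩
      simp only [dif_pos (ψ.symm j).2]
      exact ψ.apply_symm_apply j
  -- the reduced multigraph G'
  obtain ⟨G', hGE, hGEf2⟩ :
      ∃ G' : Multigraph (Fin (n - 1)) (Fin (m - 2)),
        (∀ e, (e ≠ e1 ∧ e ≠ f1) → e ≠ f2 → G'.ends (iot e) = Sym2.map k (G.ends e)) ∧
        G'.ends (iot f2) = s(k x, k b) := by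
    choose sel hsel using hisurj
    have hbar : ∀ e (h : e ≠ e1 ∧ e ≠ f1), sel (iot e) = e := by
      intro e h
      exact hiinj _ _ (hsel (iot e)).1 h (hsel (iot e)).2
    refine ⟨⟨fun j => if sel j = f2 then s(k x, k b)
        else Sym2.map k (G.ends (sel j)), ?_⟩, ?_, ?_⟩
    · intro j hdiag
      by_cases h : sel j = f2
      · simp only [if_pos h, Sym2.mk_isDiag_iff] at hdiag
        exact hbx (hkinj x b hxy (Ne.symm hyb) hdiag).symm
      · simp only [if_neg h] at hdiag
        obtain ⟨p, q, hpq⟩ : ∃ p q, G.ends (sel j) = s(p, q) := by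
          induction (G.ends (sel j)) using Sym2.ind with | _ p q => exact ⟨p, q, rfl⟩
        rw [hpq] at hdiag
        simp only [Sym2.map_pair_eq, Sym2.mk_isDiag_iff] at hdiag
        have hpy : p ≠ y := fun hh =>
          hyends _ (hsel j).1.2 h (by rw [hpq, ← hh]; exact Sym2.mem_mk_left _ _)
        have hqy : q ≠ y := fun hh =>
          hyends _ (hsel j).1.2 h (by rw [hpq, ← hh]; exact Sym2.mem_mk_right _ _)
        exact G.loopless (sel j) (by rw [hpq, Sym2.mk_isDiag_iff]; exact hkinj p q hpy hqy hdiag)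
    · intro e he hef2
      show (if sel (iot e) = f2 then _ else _) = _
      rw [hbar e he, if_neg hef2]
    · show (if sel (iot f2) = f2 then _ else _) = _
      rw [hbar f2 hf2P, if_pos rfl]
  have hGEpair : ∀ e p q, (e ≠ e1 ∧ e ≠ f1) → e ≠ f2 → G.ends e = s(p, q) →
      G'.ends (iot e) = s(k p, k q) := by
    intro e p q he hef2 hend
    rw [hGE e he hef2, hend, Sym2.map_pair_eq]
  have hG'x : ∀ j, k x ∈ G'.ends j ↔ j = iot e2 ∨ j = iot f2 := by
    intro j
    constructor
    · intro hj
      obtain ⟨e, he, rfl⟩ := hisurj j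
      by_cases hef2 : e = f2
      · exact Or.inr (by rw [hef2])
      · rw [hGE e he hef2] at hj
        obtain ⟨w0, hw0, hkw0⟩ := Sym2.mem_map.1 hj
        have hw0y : w0 ≠ y := fun hh => hyends e he.2 hef2 (hh ▸ hw0)
        have hw0x : w0 = x := hkinj _ _ hw0y hxy hkw0
        rcases hxedge e (hw0x ▸ hw0) with rfl | rfl
        · exact absurd rfl he.1
        · exact Or.inl rfl
    · rintro (rfl | rfl)
      · rw [hGEpair e2 x a he2P he2f2 he2]; exact Sym2.mem_mk_left _ _
      · rw [hGEf2]; exact Sym2.mem_mk_left _ _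
  -- reachability transfer
  have L2 : ∀ W : Set (Fin m), (∀ e ∈ W, (e ≠ e1 ∧ e ≠ f1) ∧ e ≠ f2) → ∀ p q : Fin n,
      G.Reachable W p q → G'.Reachable (iot '' W) (k p) (k q) := by
    intro W hW p q h
    induction h with
    | refl => exact .refl
    | @tail r s hpr hrs ih =>
      obtain ⟨g, hgW, hend⟩ := hrs
      exact ih.tail ⟨iot g, Set.mem_image_of_mem _ hgW,
        hGEpair g r s (hW g hgW).1 (hW g hgW).2 hend⟩
  have L3 : ∀ W : Set (Fin m), (∀ e ∈ W, (e ≠ e1 ∧ e ≠ f1) ∧ e ≠ f2) →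
      ∀ (p : Fin n) (q' : Fin (n - 1)), p ≠ y →
      G'.Reachable (iot '' W) (k p) q' → ∃ q, q ≠ y ∧ q' = k q ∧ G.Reachable W p q := by
    intro W hW p q' hpy h
    induction h with
    | refl => exact ⟨p, hpy, rfl, .refl⟩
    | @tail r' s' hpr hrs ih =>
      obtain ⟨r, hry, rfl, hreach⟩ := ih
      obtain ⟨j, hj, hend⟩ := hrs
      obtain ⟨g, hgW, rfl⟩ := hj
      obtain ⟨p1, q1, hg⟩ : ∃ p1 q1, G.ends g = s(p1, q1) := by
        induction (G.ends g) using Sym2.ind with | _ p1 q1 => exact ⟨p1, q1, rfl⟩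
      have h1y : p1 ≠ y := fun hh =>
        hyends g (hW g hgW).1.2 (hW g hgW).2 (by rw [hg, ← hh]; exact Sym2.mem_mk_left _ _)
      have h2y : q1 ≠ y := fun hh =>
        hyends g (hW g hgW).1.2 (hW g hgW).2 (by rw [hg, ← hh]; exact Sym2.mem_mk_right _ _)
      rw [hGEpair g p1 q1 (hW g hgW).1 (hW g hgW).2 hg] at hend
      rcases Sym2.eq_iff.1 hend with ⟨h1, h2⟩ | ⟨h1, h2⟩
      · have hp1r : p1 = r := hkinj _ _ h1y hry h1
        exact ⟨q1, h2y, h2.symm, hreach.tail ⟨g, hgW, by rw [hg, hp1r]⟩⟩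
      · have hq1r : q1 = r := hkinj _ _ h2y hry h2
        exact ⟨p1, h1y, h1.symm, hreach.tail ⟨g, hgW, by rw [hg, hq1r, Sym2.eq_swap]⟩⟩
  have acycImage : ∀ W : Set (Fin m), (∀ e ∈ W, (e ≠ e1 ∧ e ≠ f1) ∧ e ≠ f2) → G.Acyclic W →
      ∀ j ∈ iot '' W, ∀ p' q' : Fin (n - 1), G'.ends j = s(p', q') →
        ¬ G'.Reachable ((iot '' W) \ {j}) p' q' := by
    intro W hW hAc j hj p' q' hend hr
    obtain ⟨g, hgW, rfl⟩ := hj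
    obtain ⟨p1, q1, hg⟩ : ∃ p1 q1, G.ends g = s(p1, q1) := by
      induction (G.ends g) using Sym2.ind with | _ p1 q1 => exact ⟨p1, q1, rfl⟩
    have h1y : p1 ≠ y := fun hh =>
      hyends g (hW g hgW).1.2 (hW g hgW).2 (by rw [hg, ← hh]; exact Sym2.mem_mk_left _ _)
    have h2y : q1 ≠ y := fun hh =>
      hyends g (hW g hgW).1.2 (hW g hgW).2 (by rw [hg, ← hh]; exact Sym2.mem_mk_right _ _)
    have himg : (iot '' W) \ {iot g} = iot '' (W \ {g}) := by
      ext j'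
      constructor
      · rintro ⟨⟨g', hg', rfl⟩, hne⟩
        exact ⟨g', ⟨hg', fun hh => hne (by rw [hh]; rfl)⟩, rfl⟩
      · rintro ⟨g', ⟨hg', hgne⟩, rfl⟩
        exact ⟨⟨g', hg', rfl⟩,
          fun hh => hgne (hiinj _ _ (hW g' hg').1 (hW g hgW).1 (by simpa using hh))⟩
    rw [hGEpair g p1 q1 (hW g hgW).1 (hW g hgW).2 hg] at hend
    rw [himg] at hr
    have hW' : ∀ e ∈ W \ {g}, (e ≠ e1 ∧ e ≠ f1) ∧ e ≠ f2 := fun e he => hW e he.1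
    rcases Sym2.eq_iff.1 hend with ⟨h1, h2⟩ | ⟨h1, h2⟩
    · rw [← h1, ← h2] at hr
      obtain ⟨q2, hq2y, hq2eq, hreach⟩ := L3 (W \ {g}) hW' p1 (k q1) h1y hr
      have hq2 : q1 = q2 := hkinj _ _ h2y hq2y hq2eq
      exact hAc g hgW p1 q1 hg (hq2 ▸ hreach)
    · rw [← h1, ← h2] at hr
      obtain ⟨q2, hq2y, hq2eq, hreach⟩ := L3 (W \ {g}) hW' q1 (k p1) h2y hr
      have hq2 : p1 = q2 := hkinj _ _ h1y hq2y hq2eq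
      exact hAc g hgW p1 q1 hg (Multigraph.reach_symm (hq2 ▸ hreach))
  -- tree bodies
  have hRfaith : ∀ T : Set (Fin m), ∀ e ∈ T \ ({e1, e2, f1, f2} : Set (Fin m)),
      (e ≠ e1 ∧ e ≠ f1) ∧ e ≠ f2 := by
    intro T e he
    have h2 := he.2
    simp only [Set.mem_insert_iff, Set.mem_singleton_iff, not_or] at h2
    exact ⟨⟨h2.1, h2.2.2.1⟩, h2.2.2.2⟩
  have hRe2 : ∀ T : Set (Fin m), e2 ∉ T \ ({e1, e2, f1, f2} : Set (Fin m)) := by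
    intro T he; exact he.2 (by simp)
  have hRf2 : ∀ T : Set (Fin m), f2 ∉ T \ ({e1, e2, f1, f2} : Set (Fin m)) := by
    intro T he; exact he.2 (by simp)
  have mkConnBody : ∀ (T : Set (Fin m)) (ex ox ey oy : Fin m),
      G.IsSpanningTree T → x ∈ G.ends ex → y ∈ G.ends ey →
      ({e1, e2} : Set (Fin m)) = {ex, ox} → ({f1, f2} : Set (Fin m)) = {ey, oy} →
      ox ∉ T → oy ∉ T →
      ∀ p q : Fin n, p ≠ x → p ≠ y → q ≠ x → q ≠ y →
        G.Reachable (T \ ({e1, e2, f1, f2} : Set (Fin m))) p q := by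
    intro T ex ox ey oy hT hex hey hxpair hypair hoxT hoyT p q hpx hpy hqx hqy
    obtain ⟨ax, haxe, hxax⟩ := Multigraph.mem_ends_other hex
    have hxmem : ∀ g, x ∈ G.ends g → g ∈ ({ex, ox} : Set (Fin m)) := by
      intro g hg
      rw [← hxpair]
      rcases hxedge g hg with h | h <;> simp [h]
    have hymem : ∀ g, y ∈ G.ends g → g ∈ ({ey, oy} : Set (Fin m)) := by
      intro g hg
      rw [← hypair]
      rcases hyedge g hg with h | h <;> simp [h]
    have huniqx : ∀ g ∈ T, x ∈ G.ends g → g = ex := by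
      intro g hg hxg
      rcases hxmem g hxg with h | h
      · exact h
      · exact absurd (h ▸ hg) hoxT
    have h1 := Multigraph.reach_avoid haxe hxax huniqx hpx hqx (hT.1 p q)
    obtain ⟨ay, haye, hyay⟩ := Multigraph.mem_ends_other hey
    have huniqy : ∀ g ∈ T \ ({ex} : Set (Fin m)), y ∈ G.ends g → g = ey := by
      intro g hg hyg
      rcases hymem g hyg with h | h
      · exact h
      · exact absurd (h ▸ hg.1) hoyT
    have h2 := Multigraph.reach_avoid haye hyay huniqy hpy hqy h1
    refine Multigraph.reach_mono ?_ h2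
    rintro z ⟨⟨hzT, hzex⟩, hzey⟩
    refine ⟨hzT, ?_⟩
    intro hzmem
    simp only [Set.mem_insert_iff, Set.mem_singleton_iff] at hzmem
    have hz4 : z ∈ ({ex, ox} : Set (Fin m)) ∨ z ∈ ({ey, oy} : Set (Fin m)) := by
      rcases hzmem with h | h | h | h
      · exact Or.inl (by rw [← hxpair]; simp [h])
      · exact Or.inl (by rw [← hxpair]; simp [h])
      · exact Or.inr (by rw [← hypair]; simp [h])
      · exact Or.inr (by rw [← hypair]; simp [h])
    rcases hz4 with (h | h) | (h | h)
    · exact hzex h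
    · exact hoxT (h ▸ hzT)
    · exact hzey h
    · exact hoyT (h ▸ hzT)
  have hconnBody1 : ∀ p q : Fin n, p ≠ x → p ≠ y → q ≠ x → q ≠ y →
      G.Reachable (T1 \ ({e1, e2, f1, f2} : Set (Fin m))) p q := by
    obtain ⟨ex, ox, hex, hxp, hoxT⟩ : ∃ ex ox, x ∈ G.ends ex ∧
        ({e1, e2} : Set (Fin m)) = {ex, ox} ∧ ox ∉ T1 := by
      rcases hx12 with ⟨h1, h2⟩ | ⟨h1, h2⟩
      · exact ⟨e1, e2, by rw [he1]; exact Sym2.mem_mk_right _ _, rfl, fun h => hndd e2 h h2⟩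
      · exact ⟨e2, e1, he2x, Set.pair_comm _ _, fun h => hndd e1 h h1⟩
    obtain ⟨ey, oy, hey, hyp, hoyT⟩ : ∃ ey oy, y ∈ G.ends ey ∧
        ({f1, f2} : Set (Fin m)) = {ey, oy} ∧ oy ∉ T1 := by
      rcases hy12 with ⟨h1, h2⟩ | ⟨h1, h2⟩
      · exact ⟨f1, f2, by rw [hf1]; exact Sym2.mem_mk_right _ _, rfl, fun h => hndd f2 h h2⟩
      · exact ⟨f2, f1, hf2y, Set.pair_comm _ _, fun h => hndd f1 h h1⟩
    exact mkConnBody T1 ex ox ey oy hT1 hex hey hxp hyp hoxT hoyT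
  have hconnBody2 : ∀ p q : Fin n, p ≠ x → p ≠ y → q ≠ x → q ≠ y →
      G.Reachable (T2 \ ({e1, e2, f1, f2} : Set (Fin m))) p q := by
    obtain ⟨ex, ox, hex, hxp, hoxT⟩ : ∃ ex ox, x ∈ G.ends ex ∧
        ({e1, e2} : Set (Fin m)) = {ex, ox} ∧ ox ∉ T2 := by
      rcases hx12 with ⟨h1, h2⟩ | ⟨h1, h2⟩
      · exact ⟨e2, e1, he2x, Set.pair_comm _ _, fun h => hndd e1 h1 h⟩
      · exact ⟨e1, e2, by rw [he1]; exact Sym2.mem_mk_right _ _, rfl, fun h => hndd e2 h2 h⟩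
    obtain ⟨ey, oy, hey, hyp, hoyT⟩ : ∃ ey oy, y ∈ G.ends ey ∧
        ({f1, f2} : Set (Fin m)) = {ey, oy} ∧ oy ∉ T2 := by
      rcases hy12 with ⟨h1, h2⟩ | ⟨h1, h2⟩
      · exact ⟨f2, f1, hf2y, Set.pair_comm _ _, fun h => hndd f1 h1 h⟩
      · exact ⟨f1, f2, by rw [hf1]; exact Sym2.mem_mk_right _ _, rfl, fun h => hndd f2 h2 h⟩
    exact mkConnBody T2 ex ox ey oy hT2 hex hey hxp hyp hoxT hoyT
  have hG'treeU : ∀ (T : Set (Fin m)) (g0 : Fin m) (c0 : Fin n),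
      G.IsSpanningTree T →
      (∀ p q : Fin n, p ≠ x → p ≠ y → q ≠ x → q ≠ y →
        G.Reachable (T \ ({e1, e2, f1, f2} : Set (Fin m))) p q) →
      (g0 ≠ e1 ∧ g0 ≠ f1) → g0 ∉ T \ ({e1, e2, f1, f2} : Set (Fin m)) →
      G'.ends (iot g0) = s(k x, k c0) → c0 ≠ x → c0 ≠ y →
      G'.IsSpanningTree ((iot '' (T \ ({e1, e2, f1, f2} : Set (Fin m)))) ∪ {iot g0}) := by
    intro T g0 c0 hT hconn hg0P hg0R hg0E hc0x hc0y
    refine Multigraph.spanningTree_extend1 ?_ ?_ hg0E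
      (fun h => hc0x (hkinj x c0 hxy hc0y h).symm) ?_ ?_
    · rintro j ⟨g, hgR, rfl⟩ hkx
      rcases (hG'x _).1 hkx with h | h
      · have hge : g = e2 := hiinj _ _ (hRfaith T g hgR).1 he2P h
        exact (hRe2 T) (hge ▸ hgR)
      · have hgf : g = f2 := hiinj _ _ (hRfaith T g hgR).1 hf2P h
        exact (hRf2 T) (hgf ▸ hgR)
    · rintro ⟨g, hgR, hgeq⟩
      have : g = g0 := hiinj _ _ (hRfaith T g hgR).1 hg0P hgeq
      exact hg0R (this ▸ hgR)
    · intro p' q' hp hq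
      obtain ⟨w, hwy, rfl⟩ := hksurj p'
      obtain ⟨w', hw'y, rfl⟩ := hksurj q'
      have hwx : w ≠ x := fun hh => hp (by rw [hh])
      have hw'x : w' ≠ x := fun hh => hq (by rw [hh])
      exact L2 _ (hRfaith T) _ _ (hconn w w' hwx hwy hw'x hw'y)
    · exact acycImage _ (hRfaith T) (Multigraph.acyclic_subset Set.diff_subset hT.2)
  have hU1 := hG'treeU T1 e2 a hT1 hconnBody1 he2P (hRe2 T1)
    (hGEpair e2 x a he2P he2f2 he2) (Ne.symm hxa) hay2
  have hU2 := hG'treeU T2 f2 b hT2 hconnBody2 hf2P (hRf2 T2) hGEf2 hbx (Ne.symm hyb)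
  have hdtG' : G'.IsDoubleTree := by
    refine ⟨_, _, ?_, ?_, hU1, hU2⟩
    · rw [Set.eq_univ_iff_forall]
      intro j
      obtain ⟨e, heP, rfl⟩ := hisurj j
      by_cases h2 : e = e2
      · exact Or.inl (Or.inr (by rw [h2]; rfl))
      by_cases h4 : e = f2
      · exact Or.inr (Or.inr (by rw [h4]; rfl))
      have hmem : e ∈ T1 ∪ T2 := by rw [hUn]; trivial
      have hmemR : e ∉ ({e1, e2, f1, f2} : Set (Fin m)) := by
        simp only [Set.mem_insert_iff, Set.mem_singleton_iff]
        push_neg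
        exact ⟨heP.1, h2, heP.2, h4⟩
      rcases hmem with h | h
      · exact Or.inl (Or.inl ⟨e, ⟨h, hmemR⟩, rfl⟩)
      · exact Or.inr (Or.inl ⟨e, ⟨h, hmemR⟩, rfl⟩)
    · rw [Set.disjoint_left]
      rintro j (⟨g, hgR, rfl⟩ | hje2) hj2
      · rcases hj2 with ⟨g', hg'R, hg'eq⟩ | hjf2
        · have hgg : g' = g := hiinj _ _ (hRfaith T2 g' hg'R).1 (hRfaith T1 g hgR).1 hg'eq
          exact hndd g hgR.1 (hgg ▸ hg'R).1 |>.elim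
        · have hgf : g = f2 := hiinj _ _ (hRfaith T1 g hgR).1 hf2P hjf2
          exact (hRf2 T1) (hgf ▸ hgR)
      · have hje2' : j = iot e2 := hje2
        rcases hj2 with ⟨g', hg'R, hg'eq⟩ | hjf2
        · have hge : g' = e2 := hiinj _ _ (hRfaith T2 g' hg'R).1 he2P (by rw [hg'eq, hje2'])
          exact (hRe2 T2) (hge ▸ hg'R)
        · exact he2f2 (hiinj _ _ he2P hf2P (by rw [← hje2', hjf2]))
  have hex' : ∃ S1' S2', G'.IsDTD S1' S2' ∧ G'.Balanced c S1' S2' := by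
    by_contra hno
    have hge := hmin (n - 1) (m - 2) G' hdtG' hno
    have hpos : 0 < n := v.pos
    omega
  obtain ⟨SA, SB, hdtd', hbal'⟩ := hex'
  obtain ⟨hunion', hdisj', htA, htB⟩ := hdtd'
  have hndd' : ∀ j, j ∈ SA → j ∈ SB → False :=
    fun j h1 h2 => Set.disjoint_left.1 hdisj' h1 h2
  have hG'treex : ∀ S : Set (Fin (m - 2)), G'.IsSpanningTree S → iot e2 ∈ S ∨ iot f2 ∈ S := by
    intro S hS
    obtain ⟨j, hjS, hjx⟩ := Multigraph.exists_edge_at (hS.1 (k x) (k v))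
      (fun h => hvx (hkinj x v hxy hvy h).symm)
    rcases (hG'x j).1 hjx with rfl | rfl
    · exact Or.inl hjS
    · exact Or.inr hjS
  have hsplit' : (iot e2 ∈ SA ∧ iot f2 ∈ SB) ∨ (iot f2 ∈ SA ∧ iot e2 ∈ SB) := by
    rcases hG'treex SA htA with h1 | h1 <;> rcases hG'treex SB htB with h2 | h2
    · exact absurd h2 (fun h => hndd' _ h1 h)
    · exact Or.inl ⟨h1, h2⟩
    · exact Or.inr ⟨h1, h2⟩
    · exact absurd h2 (fun h => hndd' _ h1 h)
  -- degree transfer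
  have hInjOnIot : ∀ Wset : Set (Fin m), (∀ e ∈ Wset, e ≠ e1 ∧ e ≠ f1) → Set.InjOn iot Wset :=
    fun Wset hW e he e' he' h => hiinj _ _ (hW e he) (hW e' he') h
  have hIm : ∀ (S : Set (Fin (m - 2))) (w : Fin n), w ≠ x → w ≠ y →
      G'.incEdges S (k w) =
        iot '' (G.incEdges {e : Fin m | (e ≠ e1 ∧ e ≠ f1) ∧ iot e ∈ S} w) := by
    intro S w hwx hwy
    ext j
    constructor
    · rintro ⟨hjS, hkw⟩
      obtain ⟨e, heP', rfl⟩ := hisurj j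
      by_cases hef2 : e = f2
      · rw [hef2, hGEf2] at hkw
        rcases Sym2.mem_iff.1 hkw with h | h
        · exact absurd (hkinj w x hwy hxy h) hwx
        · have hwb : w = b := hkinj w b hwy (Ne.symm hyb) h
          exact ⟨e, ⟨⟨heP', hjS⟩, by rw [hef2, hf2, hwb]; exact Sym2.mem_mk_right _ _⟩, rfl⟩
      · rw [hGE e heP' hef2] at hkw
        obtain ⟨w0, hw0, hkw0⟩ := Sym2.mem_map.1 hkw
        have hw0y : w0 ≠ y := fun hh => hyends e heP'.2 hef2 (hh ▸ hw0)
        have hw0w : w0 = w := hkinj _ _ hw0y hwy hkw0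
        exact ⟨e, ⟨⟨heP', hjS⟩, hw0w ▸ hw0⟩, rfl⟩
    · rintro ⟨e, ⟨⟨heP', hjS⟩, hwe⟩, rfl⟩
      refine ⟨hjS, ?_⟩
      by_cases hef2 : e = f2
      · rw [hef2, hGEf2]
        have hwe' : w ∈ G.ends f2 := hef2 ▸ hwe
        have hwb : w = b := by
          rcases Sym2.mem_iff.1 (hf2 ▸ hwe') with h | h
          · exact absurd h hwy
          · exact h
        rw [hwb]; exact Sym2.mem_mk_right _ _
      · rw [hGE e heP' hef2]
        exact Sym2.mem_map.2 ⟨w, hwe, rfl⟩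
  have hdeg' : ∀ (S : Set (Fin (m - 2))) (w : Fin n), w ≠ x → w ≠ y →
      G'.deg S (k w) =
        (G.incEdges {e : Fin m | (e ≠ e1 ∧ e ≠ f1) ∧ iot e ∈ S} w).ncard := by
    intro S w hwx hwy
    show (G'.incEdges S (k w)).ncard = _
    rw [hIm S w hwx hwy]
    exact Set.ncard_image_of_injOn (hInjOnIot _ (fun e he => he.1.1))
  -- the final contradiction, in the two symmetric cases
  have final : ∀ P Q : Set (Fin (m - 2)), P ∪ Q = Set.univ → Disjoint P Q →
      G'.IsSpanningTree P → G'.IsSpanningTree Q → G'.Balanced c P Q →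
      iot e2 ∈ P → iot f2 ∈ Q → False := by
    intro P Q hPQu hPQd htP htQ hbalPQ heP hfQ
    have hnddPQ : ∀ j, j ∈ P → j ∈ Q → False :=
      fun j h1 h2 => Set.disjoint_left.1 hPQd h1 h2
    have hf2BA : f2 ∉ {e : Fin m | (e ≠ e1 ∧ e ≠ f1) ∧ iot e ∈ P} := fun h => hnddPQ _ h.2 hfQ
    have he2BB : e2 ∉ {e : Fin m | (e ≠ e1 ∧ e ≠ f1) ∧ iot e ∈ Q} := fun h => hnddPQ _ heP h.2
    have hB1faith : ∀ e ∈ ({e : Fin m | (e ≠ e1 ∧ e ≠ f1) ∧ iot e ∈ P} \ {e2}), (e ≠ e1 ∧ e ≠ f1) ∧ e ≠ f2 :=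
      fun e he => ⟨he.1.1, fun hh => hf2BA (hh ▸ he.1)⟩
    have hB2faith : ∀ e ∈ ({e : Fin m | (e ≠ e1 ∧ e ≠ f1) ∧ iot e ∈ Q} \ {f2}), (e ≠ e1 ∧ e ≠ f1) ∧ e ≠ f2 :=
      fun e he => ⟨he.1.1, fun hh => he.2 (by rw [hh]; rfl)⟩
    have hB1e2 : ∀ e ∈ ({e : Fin m | (e ≠ e1 ∧ e ≠ f1) ∧ iot e ∈ P} \ {e2}), e ≠ e2 := fun e he hh => he.2 (by rw [hh]; rfl)
    have hB2e2 : ∀ e ∈ ({e : Fin m | (e ≠ e1 ∧ e ≠ f1) ∧ iot e ∈ Q} \ {f2}), e ≠ e2 := fun e he hh => he2BB (hh ▸ he.1)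
    have hB1xy : ∀ e ∈ ({e : Fin m | (e ≠ e1 ∧ e ≠ f1) ∧ iot e ∈ P} \ {e2}), x ∉ G.ends e ∧ y ∉ G.ends e := fun e he =>
      ⟨hxends e he.1.1.1 (hB1e2 e he), hyends e he.1.1.2 (hB1faith e he).2⟩
    have hB2xy : ∀ e ∈ ({e : Fin m | (e ≠ e1 ∧ e ≠ f1) ∧ iot e ∈ Q} \ {f2}), x ∉ G.ends e ∧ y ∉ G.ends e := fun e he =>
      ⟨hxends e he.1.1.1 (hB2e2 e he), hyends e he.1.1.2 (hB2faith e he).2⟩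
    have hPeq : P \ {iot e2} = iot '' ({e : Fin m | (e ≠ e1 ∧ e ≠ f1) ∧ iot e ∈ P} \ {e2}) := by
      ext j
      constructor
      · rintro ⟨hjP, hne⟩
        obtain ⟨e, heP', rfl⟩ := hisurj j
        have hee2 : e ≠ e2 := fun hh => hne (by rw [hh]; rfl)
        exact ⟨e, ⟨⟨heP', hjP⟩, hee2⟩, rfl⟩
      · rintro ⟨g, hg, rfl⟩
        exact ⟨hg.1.2, fun hh => (hB1e2 g hg) (hiinj _ _ hg.1.1 he2P (by simpa using hh))⟩
    have hQeq : Q \ {iot f2} = iot '' ({e : Fin m | (e ≠ e1 ∧ e ≠ f1) ∧ iot e ∈ Q} \ {f2}) := by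
      ext j
      constructor
      · rintro ⟨hjQ, hne⟩
        obtain ⟨e, heP', rfl⟩ := hisurj j
        have hef2 : e ≠ f2 := fun hh => hne (by rw [hh]; rfl)
        exact ⟨e, ⟨⟨heP', hjQ⟩, hef2⟩, rfl⟩
      · rintro ⟨g, hg, rfl⟩
        exact ⟨hg.1.2, fun hh => hg.2 (hiinj _ _ hg.1.1 hf2P (by simpa using hh))⟩
    have huniqP : ∀ j ∈ P, k x ∈ G'.ends j → j = iot e2 := by
      intro j hj hkx
      rcases (hG'x j).1 hkx with h | h
      · exact h
      · exact ((hnddPQ _ (h ▸ hj) hfQ)).elim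
    have huniqQ : ∀ j ∈ Q, k x ∈ G'.ends j → j = iot f2 := by
      intro j hj hkx
      rcases (hG'x j).1 hkx with h | h
      · exact ((hnddPQ _ heP (h ▸ hj))).elim
      · exact h
    have hge2E : G'.ends (iot e2) = s(k x, k a) := hGEpair e2 x a he2P he2f2 he2
    have hkxa : k x ≠ k a := fun h => hxa (hkinj x a hxy hay2 h)
    have hkxb : k x ≠ k b := fun h => hbx (hkinj x b hxy (Ne.symm hyb) h).symm
    have hconnB1 : ∀ p q : Fin n, p ≠ x → p ≠ y → q ≠ x → q ≠ y →
        G.Reachable ({e : Fin m | (e ≠ e1 ∧ e ≠ f1) ∧ iot e ∈ P} \ {e2}) p q := by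
      intro p q hpx hpy hqx hqy
      have h1 := Multigraph.reach_avoid hge2E hkxa huniqP
        (fun h => hpx (hkinj p x hpy hxy h)) (fun h => hqx (hkinj q x hqy hxy h)) (htP.1 (k p) (k q))
      rw [hPeq] at h1
      obtain ⟨q2, hq2y, heq, hreach⟩ := L3 _ hB1faith p (k q) hpy h1
      have hq2 : q = q2 := hkinj _ _ hqy hq2y heq
      rwa [← hq2] at hreach
    have hconnB2 : ∀ p q : Fin n, p ≠ x → p ≠ y → q ≠ x → q ≠ y →
        G.Reachable ({e : Fin m | (e ≠ e1 ∧ e ≠ f1) ∧ iot e ∈ Q} \ {f2}) p q := by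
      intro p q hpx hpy hqx hqy
      have h1 := Multigraph.reach_avoid hGEf2 hkxb huniqQ
        (fun h => hpx (hkinj p x hpy hxy h)) (fun h => hqx (hkinj q x hqy hxy h)) (htQ.1 (k p) (k q))
      rw [hQeq] at h1
      obtain ⟨q2, hq2y, heq, hreach⟩ := L3 _ hB2faith p (k q) hpy h1
      have hq2 : q = q2 := hkinj _ _ hqy hq2y heq
      rwa [← hq2] at hreach
    have hacycB1 : ∀ g ∈ ({e : Fin m | (e ≠ e1 ∧ e ≠ f1) ∧ iot e ∈ P} \ {e2}), ∀ p q : Fin n, G.ends g = s(p, q) →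
        ¬ G.Reachable (({e : Fin m | (e ≠ e1 ∧ e ≠ f1) ∧ iot e ∈ P} \ {e2}) \ {g}) p q := by
      intro g hg p q hend hr
      have h2' := L2 _ (fun e he => hB1faith e he.1) p q hr
      have hsub : iot '' (({e : Fin m | (e ≠ e1 ∧ e ≠ f1) ∧ iot e ∈ P} \ {e2}) \ {g}) ⊆ P \ {iot g} := by
        rintro j ⟨g', ⟨hg', hgne⟩, rfl⟩
        exact ⟨hg'.1.2, fun hh => hgne (hiinj _ _ hg'.1.1 hg.1.1 (by simpa using hh))⟩
      exact htP.2 (iot g) hg.1.2 (k p) (k q)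
        (hGEpair g p q hg.1.1 (hB1faith g hg).2 hend) (Multigraph.reach_mono hsub h2')
    have hacycB2 : ∀ g ∈ ({e : Fin m | (e ≠ e1 ∧ e ≠ f1) ∧ iot e ∈ Q} \ {f2}), ∀ p q : Fin n, G.ends g = s(p, q) →
        ¬ G.Reachable (({e : Fin m | (e ≠ e1 ∧ e ≠ f1) ∧ iot e ∈ Q} \ {f2}) \ {g}) p q := by
      intro g hg p q hend hr
      have h2' := L2 _ (fun e he => hB2faith e he.1) p q hr
      have hsub : iot '' (({e : Fin m | (e ≠ e1 ∧ e ≠ f1) ∧ iot e ∈ Q} \ {f2}) \ {g}) ⊆ Q \ {iot g} := by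
        rintro j ⟨g', ⟨hg', hgne⟩, rfl⟩
        exact ⟨hg'.1.2, fun hh => hgne (hiinj _ _ hg'.1.1 hg.1.1 (by simpa using hh))⟩
      exact htQ.2 (iot g) hg.1.2 (k p) (k q)
        (hGEpair g p q hg.1.1 (hB2faith g hg).2 hend) (Multigraph.reach_mono hsub h2')
    have hW1tree : G.IsSpanningTree (({e : Fin m | (e ≠ e1 ∧ e ≠ f1) ∧ iot e ∈ P} \ {e2}) ∪ {e2, f1}) :=
      Multigraph.spanningTree_extend2 hxy hB1xy
        (fun h => (hB1e2 e2 h) rfl) (fun h => h.1.1.2 rfl) he2f1 he2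
        (by rw [hf1]; exact Sym2.eq_swap) ⟨Ne.symm hxa, hay2⟩ ⟨hvx, hvy⟩ hconnB1 hacycB1
    have hW2tree : G.IsSpanningTree (({e : Fin m | (e ≠ e1 ∧ e ≠ f1) ∧ iot e ∈ Q} \ {f2}) ∪ {e1, f2}) :=
      Multigraph.spanningTree_extend2 hxy hB2xy
        (fun h => h.1.1.1 rfl) (fun h => h.2 rfl) he1f2
        (by rw [he1]; exact Sym2.eq_swap) hf2 ⟨hvx, hvy⟩ ⟨hbx, Ne.symm hyb⟩ hconnB2 hacycB2
    have hWu : (({e : Fin m | (e ≠ e1 ∧ e ≠ f1) ∧ iot e ∈ P} \ {e2}) ∪ {e2, f1}) ∪ (({e : Fin m | (e ≠ e1 ∧ e ≠ f1) ∧ iot e ∈ Q} \ {f2}) ∪ {e1, f2}) = Set.univ := by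
      rw [Set.eq_univ_iff_forall]
      intro e
      by_cases h1 : e = e1
      · exact Or.inr (Or.inr (by simp [h1]))
      by_cases h3 : e = f1
      · exact Or.inl (Or.inr (by simp [h3]))
      by_cases h2 : e = e2
      · exact Or.inl (Or.inr (by simp [h2]))
      by_cases h4 : e = f2
      · exact Or.inr (Or.inr (by simp [h4]))
      have hmem : iot e ∈ P ∪ Q := by rw [hPQu]; trivial
      rcases hmem with h | h
      · exact Or.inl (Or.inl ⟨⟨⟨h1, h3⟩, h⟩, by simp [h2]⟩)
      · exact Or.inr (Or.inl ⟨⟨⟨h1, h3⟩, h⟩, by simp [h4]⟩)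
    have hWd : Disjoint (({e : Fin m | (e ≠ e1 ∧ e ≠ f1) ∧ iot e ∈ P} \ {e2}) ∪ {e2, f1}) (({e : Fin m | (e ≠ e1 ∧ e ≠ f1) ∧ iot e ∈ Q} \ {f2}) ∪ {e1, f2}) := by
      rw [Set.disjoint_left]
      rintro e (he | he) (hf | hf)
      · exact hnddPQ _ he.1.2 hf.1.2
      · rcases hf with hf | hf
        · exact he.1.1.1 hf
        · exact (hB1faith e he).2 hf
      · rcases he with he | he
        · exact hB2e2 e hf (by rw [he])
        · exact hf.1.1.2 he
      · rcases he with he | he <;> rcases hf with hf | hf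
        · exact he12 (hf.symm.trans he)
        · exact he2f2 (he.symm.trans hf)
        · exact he1f1 (hf.symm.trans he)
        · exact hf12 (he.symm.trans hf)
    -- degrees
    have hW1inc : ∀ w : Fin n, w ≠ x → w ≠ y → w ≠ v →
        G.incEdges (({e : Fin m | (e ≠ e1 ∧ e ≠ f1) ∧ iot e ∈ P} \ {e2}) ∪ {e2, f1}) w = G.incEdges {e : Fin m | (e ≠ e1 ∧ e ≠ f1) ∧ iot e ∈ P} w := by
      intro w hwx hwy hwv
      ext e
      constructor
      · rintro ⟨he, hwe⟩
        rcases he with h | h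
        · exact ⟨h.1, hwe⟩
        · rcases h with h | h
          · subst h; exact ⟨⟨he2P, heP⟩, hwe⟩
          · subst h
            rcases Sym2.mem_iff.1 (hf1 ▸ hwe) with hh | hh
            · exact absurd hh hwv
            · exact absurd hh hwy
      · rintro ⟨he, hwe⟩
        by_cases h2 : e = e2
        · exact ⟨Or.inr (by simp [h2]), hwe⟩
        · exact ⟨Or.inl ⟨he, by simp [h2]⟩, hwe⟩
    have hW2inc : ∀ w : Fin n, w ≠ x → w ≠ y → w ≠ v →
        G.incEdges (({e : Fin m | (e ≠ e1 ∧ e ≠ f1) ∧ iot e ∈ Q} \ {f2}) ∪ {e1, f2}) w = G.incEdges {e : Fin m | (e ≠ e1 ∧ e ≠ f1) ∧ iot e ∈ Q} w := by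
      intro w hwx hwy hwv
      ext e
      constructor
      · rintro ⟨he, hwe⟩
        rcases he with h | h
        · exact ⟨h.1, hwe⟩
        · rcases h with h | h
          · subst h
            rcases Sym2.mem_iff.1 (he1 ▸ hwe) with hh | hh
            · exact absurd hh hwv
            · exact absurd hh hwx
          · subst h; exact ⟨⟨hf2P, hfQ⟩, hwe⟩
      · rintro ⟨he, hwe⟩
        by_cases h4 : e = f2
        · exact ⟨Or.inr (by simp [h4]), hwe⟩
        · exact ⟨Or.inl ⟨he, by simp [h4]⟩, hwe⟩
    have hW1incv : G.incEdges (({e : Fin m | (e ≠ e1 ∧ e ≠ f1) ∧ iot e ∈ P} \ {e2}) ∪ {e2, f1}) v = insert f1 (G.incEdges {e : Fin m | (e ≠ e1 ∧ e ≠ f1) ∧ iot e ∈ P} v) := by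
      ext e
      constructor
      · rintro ⟨he, hve⟩
        rcases he with h | h
        · exact Or.inr ⟨h.1, hve⟩
        · rcases h with h | h
          · subst h; exact Or.inr ⟨⟨he2P, heP⟩, hve⟩
          · exact Or.inl h
      · rintro (rfl | ⟨he, hve⟩)
        · exact ⟨Or.inr (by simp), by rw [hf1]; exact Sym2.mem_mk_left _ _⟩
        · by_cases h2 : e = e2
          · exact ⟨Or.inr (by simp [h2]), hve⟩
          · exact ⟨Or.inl ⟨he, by simp [h2]⟩, hve⟩
    have hW2incv : G.incEdges (({e : Fin m | (e ≠ e1 ∧ e ≠ f1) ∧ iot e ∈ Q} \ {f2}) ∪ {e1, f2}) v = insert e1 (G.incEdges {e : Fin m | (e ≠ e1 ∧ e ≠ f1) ∧ iot e ∈ Q} v) := by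
      ext e
      constructor
      · rintro ⟨he, hve⟩
        rcases he with h | h
        · exact Or.inr ⟨h.1, hve⟩
        · rcases h with h | h
          · exact Or.inl h
          · subst h; exact Or.inr ⟨⟨hf2P, hfQ⟩, hve⟩
      · rintro (rfl | ⟨he, hve⟩)
        · exact ⟨Or.inr (by simp), by rw [he1]; exact Sym2.mem_mk_left _ _⟩
        · by_cases h4 : e = f2
          · exact ⟨Or.inr (by simp [h4]), hve⟩
          · exact ⟨Or.inl ⟨he, by simp [h4]⟩, hve⟩
    have hW1incx : G.incEdges (({e : Fin m | (e ≠ e1 ∧ e ≠ f1) ∧ iot e ∈ P} \ {e2}) ∪ {e2, f1}) x = {e2} := by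
      ext e
      constructor
      · rintro ⟨he, hxe⟩
        rcases hxedge e hxe with h | h
        · exfalso
          rcases he with hm | hm
          · exact hm.1.1.1 h
          · rcases hm with hm | hm
            · exact he12 (h.symm.trans hm)
            · exact he1f1 (h.symm.trans hm)
        · exact h
      · rintro rfl
        exact ⟨Or.inr (by simp), he2x⟩
    have hW2incx : G.incEdges (({e : Fin m | (e ≠ e1 ∧ e ≠ f1) ∧ iot e ∈ Q} \ {f2}) ∪ {e1, f2}) x = {e1} := by
      ext e
      constructor
      · rintro ⟨he, hxe⟩
        rcases hxedge e hxe with h | h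
        · exact h
        · exfalso
          rcases he with hm | hm
          · exact (hB2e2 e hm) h
          · rcases hm with hm | hm
            · exact he12 (hm.symm.trans h)
            · exact he2f2 (h.symm.trans hm)
      · rintro rfl
        exact ⟨Or.inr (by simp), by rw [he1]; exact Sym2.mem_mk_right _ _⟩
    have hW1incy : G.incEdges (({e : Fin m | (e ≠ e1 ∧ e ≠ f1) ∧ iot e ∈ P} \ {e2}) ∪ {e2, f1}) y = {f1} := by
      ext e
      constructor
      · rintro ⟨he, hye⟩
        rcases hyedge e hye with h | h
        · exact h
        · exfalso
          rcases he with hm | hm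
          · exact (hB1faith e hm).2 h
          · rcases hm with hm | hm
            · exact he2f2 (hm.symm.trans h)
            · exact hf12 (hm.symm.trans h)
      · rintro rfl
        exact ⟨Or.inr (by simp), by rw [hf1]; exact Sym2.mem_mk_right _ _⟩
    have hW2incy : G.incEdges (({e : Fin m | (e ≠ e1 ∧ e ≠ f1) ∧ iot e ∈ Q} \ {f2}) ∪ {e1, f2}) y = {f2} := by
      ext e
      constructor
      · rintro ⟨he, hye⟩
        rcases hyedge e hye with h | h
        · exfalso
          rcases he with hm | hm
          · exact hm.1.1.2 h
          · rcases hm with hm | hm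
            · exact he1f1 (hm.symm.trans h)
            · exact hf12 (h.symm.trans hm)
        · exact h
      · rintro rfl
        exact ⟨Or.inr (by simp), hf2y⟩
    have hf1BA : f1 ∉ G.incEdges {e : Fin m | (e ≠ e1 ∧ e ≠ f1) ∧ iot e ∈ P} v := fun h => h.1.1.2 rfl
    have he1BB : e1 ∉ G.incEdges {e : Fin m | (e ≠ e1 ∧ e ≠ f1) ∧ iot e ∈ Q} v := fun h => h.1.1.1 rfl
    have hbalW : G.Balanced c (({e : Fin m | (e ≠ e1 ∧ e ≠ f1) ∧ iot e ∈ P} \ {e2}) ∪ {e2, f1}) (({e : Fin m | (e ≠ e1 ∧ e ≠ f1) ∧ iot e ∈ Q} \ {f2}) ∪ {e1, f2}) := by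
      intro w
      by_cases hwx : w = x
      · subst hwx
        have d1 : G.deg (({e : Fin m | (e ≠ e1 ∧ e ≠ f1) ∧ iot e ∈ P} \ {e2}) ∪ {e2, f1}) w = 1 := by
          show (G.incEdges _ w).ncard = 1
          rw [hW1incx]; exact Set.ncard_singleton _
        have d2 : G.deg (({e : Fin m | (e ≠ e1 ∧ e ≠ f1) ∧ iot e ∈ Q} \ {f2}) ∪ {e1, f2}) w = 1 := by
          show (G.incEdges _ w).ncard = 1
          rw [hW2incx]; exact Set.ncard_singleton _
        rw [d1, d2]; simp
      by_cases hwy : w = y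
      · subst hwy
        have d1 : G.deg (({e : Fin m | (e ≠ e1 ∧ e ≠ f1) ∧ iot e ∈ P} \ {e2}) ∪ {e2, f1}) w = 1 := by
          show (G.incEdges _ w).ncard = 1
          rw [hW1incy]; exact Set.ncard_singleton _
        have d2 : G.deg (({e : Fin m | (e ≠ e1 ∧ e ≠ f1) ∧ iot e ∈ Q} \ {f2}) ∪ {e1, f2}) w = 1 := by
          show (G.incEdges _ w).ncard = 1
          rw [hW2incy]; exact Set.ncard_singleton _
        rw [d1, d2]; simp
      by_cases hwv : w = v
      · subst hwv
        have d1 : G.deg (({e : Fin m | (e ≠ e1 ∧ e ≠ f1) ∧ iot e ∈ P} \ {e2}) ∪ {e2, f1}) w = G'.deg P (k w) + 1 := by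
          show (G.incEdges _ w).ncard = _
          rw [hW1incv, Set.ncard_insert_of_notMem hf1BA (Set.toFinite _),
            hdeg' P w hwx hwy]
        have d2 : G.deg (({e : Fin m | (e ≠ e1 ∧ e ≠ f1) ∧ iot e ∈ Q} \ {f2}) ∪ {e1, f2}) w = G'.deg Q (k w) + 1 := by
          show (G.incEdges _ w).ncard = _
          rw [hW2incv, Set.ncard_insert_of_notMem he1BB (Set.toFinite _),
            hdeg' Q w hwx hwy]
        have hb := hbalPQ (k w)
        rw [d1, d2]
        rw [show ((G'.deg P (k w) + 1 : ℕ) : ℤ) - ((G'.deg Q (k w) + 1 : ℕ) : ℤ)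
            = ((G'.deg P (k w) : ℕ) : ℤ) - ((G'.deg Q (k w) : ℕ) : ℤ) by push_cast; ring]
        exact hb
      · have d1 : G.deg (({e : Fin m | (e ≠ e1 ∧ e ≠ f1) ∧ iot e ∈ P} \ {e2}) ∪ {e2, f1}) w = G'.deg P (k w) := by
          show (G.incEdges _ w).ncard = _
          rw [hW1inc w hwx hwy hwv, hdeg' P w hwx hwy]
        have d2 : G.deg (({e : Fin m | (e ≠ e1 ∧ e ≠ f1) ∧ iot e ∈ Q} \ {f2}) ∪ {e1, f2}) w = G'.deg Q (k w) := by
          show (G.incEdges _ w).ncard = _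
          rw [hW2inc w hwx hwy hwv, hdeg' Q w hwx hwy]
        rw [d1, d2]
        exact hbalPQ (k w)
    exact hbal ⟨(({e : Fin m | (e ≠ e1 ∧ e ≠ f1) ∧ iot e ∈ P} \ {e2}) ∪ {e2, f1}), (({e : Fin m | (e ≠ e1 ∧ e ≠ f1) ∧ iot e ∈ Q} \ {f2}) ∪ {e1, f2}), ⟨hWu, hWd, hW1tree, hW2tree⟩, hbalW⟩
  rcases hsplit' with ⟨h1, h2⟩ | ⟨h1, h2⟩
  · exact final SA SB hunion' hdisj' htA htB hbal' h1 h2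
  · exact final SB SA (by rw [Set.union_comm]; exact hunion') hdisj'.symm htB htA
      (fun w => by rw [abs_sub_comm]; exact hbal' w) h2 h1
end
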